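/- arXiv:1308.4439 — 5 statements merged into one kernel-verified Lean document; each statement's English description precedes it below -/
import Mathlib

section
/- For every λ = (λ_0,…,λ_N) ∈ K^{N+1} with λ_0 ≠ 0 and ‖λ_i/λ_0‖ < 1 for i = 1,…,N, the family of terms of the series Φ evaluated at λ is summable in K, and the sum Φ(λ) satisfies ‖Φ(λ)‖ = 1; in particular Φ(λ) ≠ 0. -/
open scoped BigOperators Classical

namespace AHG

/-- `hat v = (1, v) ∈ ℤ^{n+1}`: coordinate `0` equals `1`, the rest is `v`. -/
def hat {n : ℕ} (v : Fin n → ℤ) : Fin (n + 1) → ℤ := Fin.cons 1 v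

/-- The coefficients `b_i` of the Dwork series
`θ(t) = exp(π(t - t^p)) = exp(πt)·exp(-πt^p) = Σ b_i t^i`;
explicitly `b_i = Σ_{j + p k = i} π^{j+k} (-1)^k / (j! k!)`. -/
noncomputable def dworkB (p : ℕ) {K : Type*} [Field K] (π : K) (i : ℕ) : K :=
  ∑ k ∈ Finset.range (i + 1),
    if p * k ≤ i then
      ((-1 : K) ^ k * π ^ (i - p * k + k)) /
        ((Nat.factorial (i - p * k) : K) * (Nat.factorial k : K))
    else 0

/-- The real cone `C` generated by `â_0, …, â_N`. -/
def cone {n N : ℕ} (a : Fin (N + 1) → Fin n → ℤ) : Set (Fin (n + 1) → ℝ) :=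
  {x | ∃ t : Fin (N + 1) → ℝ, (∀ j, 0 ≤ t j) ∧
      x = ∑ j, t j • fun i => (hat (a j) i : ℝ)}

/-- `M = C ∩ ℤA`. -/
def latticeM {n N : ℕ} (a : Fin (N + 1) → Fin n → ℤ) : Set (Fin (n + 1) → ℤ) :=
  {μ | (fun i => (μ i : ℝ)) ∈ cone a ∧
      μ ∈ AddSubgroup.closure (Set.range fun j => hat (a j))}

/-- `M°`: the elements of `M` lying on no proper (exposed) face of `C`, i.e. every linear
functional nonnegative on `C` and vanishing at `μ` vanishes identically on `C`. -/
def latticeMint {n N : ℕ} (a : Fin (N + 1) → Fin n → ℤ) : Set (Fin (n + 1) → ℤ) :=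
  {μ | μ ∈ latticeM a ∧
      ∀ ℓ : (Fin (n + 1) → ℝ) →ₗ[ℝ] ℝ, (∀ x ∈ cone a, 0 ≤ ℓ x) →
        ℓ (fun i => (μ i : ℝ)) = 0 → ∀ x ∈ cone a, ℓ x = 0}

/-- `a 0` is the unique lattice point interior to `Δ = conv(a 1, …, a N)`. -/
def uniqueInteriorPoint {n N : ℕ} (a : Fin (N + 1) → Fin n → ℤ) : Prop :=
  (fun i => (a 0 i : ℝ)) ∈
      interior (convexHull ℝ (Set.range fun j : Fin N => fun i => (a j.succ i : ℝ))) ∧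
    ∀ v : Fin n → ℤ,
      (fun i => (v i : ℝ)) ∈
          interior (convexHull ℝ (Set.range fun j : Fin N => fun i => (a j.succ i : ℝ))) →
        v = a 0

/-- The set `L_+`, identified with the tuples `(l_1,…,l_N) ∈ ℤ_{≥0}^N` such that
`Σ l_i â_i = (Σ l_i) â_0` (then `l_0 = -Σ l_i`). -/
def LplusSet {n N : ℕ} (a : Fin (N + 1) → Fin n → ℤ) : Set (Fin N → ℕ) :=
  {l | ∑ i : Fin N, l i • hat (a i.succ) = (∑ i : Fin N, l i) • hat (a 0)}

/-- The norm (sup of coefficient norms) of an element of `R`, i.e. of a formal power series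
in the variables `λ_i/λ_0`, `i = 1, …, N`. -/
noncomputable def Rnorm {N : ℕ} {K : Type*} [NormedField K]
    (f : MvPowerSeries (Fin N) K) : ℝ :=
  ⨆ ν : Fin N →₀ ℕ, ‖f ν‖

/-- Membership in `R`: bounded coefficients. -/
def memR {N : ℕ} {K : Type*} [NormedField K] (f : MvPowerSeries (Fin N) K) : Prop :=
  BddAbove (Set.range fun ν : Fin N →₀ ℕ => ‖f ν‖)

/-- Norm-convergence (in the sup norm of `R`) of a series of elements of `R` to `g`. -/
def HasSumR {ι : Type*} {N : ℕ} {K : Type*} [NormedField K]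
    (f : ι → MvPowerSeries (Fin N) K) (g : MvPowerSeries (Fin N) K) : Prop :=
  Filter.Tendsto (fun s : Finset ι => Rnorm (g - ∑ i ∈ s, f i)) Filter.atTop (nhds 0)

/-- Invertibility in `R`. -/
def invR {N : ℕ} {K : Type*} [NormedField K] (f : MvPowerSeries (Fin N) K) : Prop :=
  memR f ∧ ∃ g : MvPowerSeries (Fin N) K, memR g ∧ f * g = 1

/-- `B_μ(1, y_1, …, y_N)` as a power series (in fact a polynomial) in `y_i = λ_i/λ_0`:
the coefficient of `y^ν` is `b_{ν_0} b_{ν_1} ⋯ b_{ν_N}` where `ν_0 = μ_0 - Σ ν_i`,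
whenever `(ν_0, ν_1, …, ν_N)` is a nonnegative solution of `Σ ν_i â_i = μ`, and `0` otherwise. -/
noncomputable def Bone (p : ℕ) {n N : ℕ} (a : Fin (N + 1) → Fin n → ℤ)
    {K : Type*} [Field K] (π : K) (μ : Fin (n + 1) → ℤ) : MvPowerSeries (Fin N) K :=
  fun ν =>
    if 0 ≤ μ 0 - ∑ i : Fin N, (ν i : ℤ) ∧
        (μ 0 - ∑ i : Fin N, (ν i : ℤ)) • hat (a 0) +
          ∑ i : Fin N, (ν i : ℤ) • hat (a i.succ) = μ then
      dworkB p π (μ 0 - ∑ i : Fin N, (ν i : ℤ)).toNat * ∏ i : Fin N, dworkB p π (ν i)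
    else 0

/-- The substitution `λ_i/λ_0 ↦ λ_i^p/λ_0^p` on `R`, i.e. `ξ(λ) ↦ ξ(λ^p)`. -/
noncomputable def frobR (p : ℕ) {N : ℕ} {K : Type*} [Field K]
    (f : MvPowerSeries (Fin N) K) : MvPowerSeries (Fin N) K :=
  fun ν => if h : ∃ ν' : Fin N →₀ ℕ, p • ν' = ν then f h.choose else 0

/-- The term indexed by `ν ∈ M°` in the series defining `η_ρ`:
`π^{ρ_0-ν_0} B_{pν-ρ}(1, λ_1/λ_0, …, λ_N/λ_0) ξ_ν(λ^p)` when `pν - ρ ∈ M`, else `0`. -/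
noncomputable def etaTerm (p : ℕ) {n N : ℕ} (a : Fin (N + 1) → Fin n → ℤ)
    {K : Type*} [Field K] (π : K)
    (ξ : {μ : Fin (n + 1) → ℤ // μ ∈ latticeMint a} → MvPowerSeries (Fin N) K)
    (ρ : Fin (n + 1) → ℤ) (ν : {μ : Fin (n + 1) → ℤ // μ ∈ latticeMint a}) :
    MvPowerSeries (Fin N) K :=
  if (p : ℤ) • ν.1 - ρ ∈ latticeM a then
    π ^ (ρ 0 - ν.1 0) • (Bone p a π ((p : ℤ) • ν.1 - ρ) * frobR p (ξ ν))
  else 0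


/-- The index type `M°` (as a subtype). -/
abbrev Msub {n N : ℕ} (a : Fin (N + 1) → Fin n → ℤ) : Type _ :=
  {μ : Fin (n + 1) → ℤ // μ ∈ latticeMint a}

/-- Membership in `S`: a family `(ξ_μ)_{μ ∈ M°}` of elements of `R` with uniformly
bounded coefficients. -/
def memS {n N : ℕ} (a : Fin (N + 1) → Fin n → ℤ) {K : Type*} [NormedField K]
    (ξ : {μ : Fin (n + 1) → ℤ // μ ∈ latticeMint a} → MvPowerSeries (Fin N) K) : Prop :=
  BddAbove (Set.range
    fun q : {μ : Fin (n + 1) → ℤ // μ ∈ latticeMint a} × (Fin N →₀ ℕ) => ‖ξ q.1 q.2‖)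

/-- The norm on `S`. -/
noncomputable def Snorm {n N : ℕ} (a : Fin (N + 1) → Fin n → ℤ) {K : Type*} [NormedField K]
    (ξ : {μ : Fin (n + 1) → ℤ // μ ∈ latticeMint a} → MvPowerSeries (Fin N) K) : ℝ :=
  ⨆ μ : {μ : Fin (n + 1) → ℤ // μ ∈ latticeMint a}, Rnorm (ξ μ)

/-- The truncation `Φ_1` of `Φ`, as a function of `λ = (λ_0, …, λ_N)`. -/
noncomputable def Phi1 (p : ℕ) {n N : ℕ} (a : Fin (N + 1) → Fin n → ℤ)
    {K : Type*} [Field K] (lam : Fin (N + 1) → K) : K :=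
  ∑ l ∈ (Fintype.piFinset fun _ : Fin N => Finset.range p).filter
      (fun l => l ∈ LplusSet a ∧ ∑ i : Fin N, l i ≤ p - 1),
    (-1 : K) ^ (∑ i : Fin N, l i) * (Nat.multinomial Finset.univ l : K) *
      ∏ i : Fin N, (lam i.succ / lam 0) ^ l i

/-- The open polydisk `𝒟`. -/
def Dopen {N : ℕ} {K : Type*} [NormedField K] : Set (Fin (N + 1) → K) :=
  {lam | lam 0 ≠ 0 ∧ ∀ i : Fin N, ‖lam i.succ / lam 0‖ < 1}

/-- The region `𝒟_+`. -/
def Dplus (p : ℕ) {n N : ℕ} (a : Fin (N + 1) → Fin n → ℤ) {K : Type*} [NormedField K] :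
    Set (Fin (N + 1) → K) :=
  {lam | lam 0 ≠ 0 ∧ (∀ i : Fin N, ‖lam i.succ / lam 0‖ ≤ 1) ∧ ‖Phi1 p a lam‖ = 1}

/-- `f` is (on `𝒟_+`) a rational function of `λ_1/λ_0, …, λ_N/λ_0` defined at every
point of `𝒟_+`. -/
def RatOnDplus (p : ℕ) {n N : ℕ} (a : Fin (N + 1) → Fin n → ℤ) {K : Type*} [NormedField K]
    (f : (Fin (N + 1) → K) → K) : Prop :=
  ∃ q r : MvPolynomial (Fin N) K,
    (∀ lam ∈ Dplus p a (K := K), MvPolynomial.eval (fun i => lam i.succ / lam 0) r ≠ 0) ∧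
    ∀ lam ∈ Dplus p a (K := K),
      f lam = MvPolynomial.eval (fun i => lam i.succ / lam 0) q /
        MvPolynomial.eval (fun i => lam i.succ / lam 0) r

/-- `F` is a uniform limit on `𝒟_+` of rational functions in the `λ_i/λ_0` defined
at every point of `𝒟_+`. -/
def UnifLimitRat (p : ℕ) {n N : ℕ} (a : Fin (N + 1) → Fin n → ℤ) {K : Type*} [NormedField K]
    (F : (Fin (N + 1) → K) → K) : Prop :=
  ∃ u : ℕ → (Fin (N + 1) → K) → K, (∀ k, RatOnDplus p a (u k)) ∧
    TendstoUniformlyOn u F Filter.atTop (Dplus p a (K := K))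

/-- Membership in `R'`: the power series converges on `𝒟` and its sum extends to an
element of `R'`, i.e. to a uniform limit on `𝒟_+` of rational functions in the `λ_i/λ_0`
defined at every point of `𝒟_+`. -/
def memR' (p : ℕ) {n N : ℕ} (a : Fin (N + 1) → Fin n → ℤ) {K : Type*} [NormedField K]
    (c : MvPowerSeries (Fin N) K) : Prop :=
  ∃ F : (Fin (N + 1) → K) → K, UnifLimitRat p a F ∧
    ∀ lam ∈ Dopen (N := N) (K := K),
      HasSum (fun ν : Fin N →₀ ℕ => c ν * ∏ i : Fin N, (lam i.succ / lam 0) ^ ν i) (F lam)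

/-- Invertibility in `R'`. -/
def invR' (p : ℕ) {n N : ℕ} (a : Fin (N + 1) → Fin n → ℤ) {K : Type*} [NormedField K]
    (f : MvPowerSeries (Fin N) K) : Prop :=
  memR' p a f ∧ ∃ g : MvPowerSeries (Fin N) K, memR' p a g ∧ f * g = 1

/-- Membership in `S'`. -/
def memS' (p : ℕ) {n N : ℕ} (a : Fin (N + 1) → Fin n → ℤ) {K : Type*} [NormedField K]
    (ξ : {μ : Fin (n + 1) → ℤ // μ ∈ latticeMint a} → MvPowerSeries (Fin N) K) : Prop :=
  memS a ξ ∧ ∀ μ, memR' p a (ξ μ)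

/-- Membership in `T`: `ξ ∈ S`, `ξ_{â_0} = 1` and `‖ξ‖ = 1`; the distinguished index
`μ0 ∈ M°` is the point `â_0`. -/
def memT {n N : ℕ} (a : Fin (N + 1) → Fin n → ℤ) {K : Type*} [NormedField K]
    (μ0 : {μ : Fin (n + 1) → ℤ // μ ∈ latticeMint a})
    (ξ : {μ : Fin (n + 1) → ℤ // μ ∈ latticeMint a} → MvPowerSeries (Fin N) K) : Prop :=
  memS a ξ ∧ ξ μ0 = 1 ∧ Snorm a ξ = 1

/-- `ζ` is a value of the map `β` at `ξ`: `ζ = α*(ξ)/η_{â_0}`, where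
`α*(ξ) = (η_ρ)_{ρ ∈ M°}` is given by the norm-convergent series of `etaTerm`s. -/
def isBeta (p : ℕ) {n N : ℕ} (a : Fin (N + 1) → Fin n → ℤ) {K : Type*} [NormedField K] (π : K)
    (μ0 : {μ : Fin (n + 1) → ℤ // μ ∈ latticeMint a})
    (ξ ζ : {μ : Fin (n + 1) → ℤ // μ ∈ latticeMint a} → MvPowerSeries (Fin N) K) : Prop :=
  ∃ η : {μ : Fin (n + 1) → ℤ // μ ∈ latticeMint a} → MvPowerSeries (Fin N) K,
    (∀ ρ, HasSumR (etaTerm p a π ξ ρ.1) (η ρ)) ∧ ∀ ρ, ζ ρ = η ρ * (η μ0)⁻¹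

/-- The coefficients `ξ_ρ` (Eq. (3.4) of the paper) of
`ξ(λ,x) = γ°(G(λ_0,x) ∏_{i=1}^N exp(πλ_i x^{â_i}))`:
`ξ_ρ = Σ (-1)^{ρ_0-1+Σl_i} (ρ_0-1+Σl_i)!/(l_1!⋯l_N!) ∏ (λ_i/λ_0)^{l_i}`, summed over
`(l_1,…,l_N) ∈ ℤ_{≥0}^N` such that `l_0 := ρ_0-1+Σl_i ≥ 0` and
`Σ l_i â_i - (l_0+1) â_0 = -ρ`. -/
noncomputable def xiRho {n N : ℕ} (a : Fin (N + 1) → Fin n → ℤ) (K : Type*) [Field K]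
    (ρ : Fin (n + 1) → ℤ) : MvPowerSeries (Fin N) K :=
  fun l =>
    if 0 ≤ ρ 0 - 1 + ∑ i : Fin N, (l i : ℤ) ∧
        (∑ i : Fin N, (l i : ℤ) • hat (a i.succ)) -
          (ρ 0 + ∑ i : Fin N, (l i : ℤ)) • hat (a 0) = -ρ then
      (-1 : K) ^ (ρ 0 - 1 + ∑ i : Fin N, (l i : ℤ)) *
        ((ρ 0 - 1 + ∑ i : Fin N, (l i : ℤ)).toNat.factorial : K) /
        ((∏ i : Fin N, (l i).factorial : ℕ) : K)
    else 0

/-- The series `Φ`, as a formal power series in the variables `λ_i/λ_0`. -/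
noncomputable def PhiSeries {n N : ℕ} (a : Fin (N + 1) → Fin n → ℤ) (K : Type*) [Field K] :
    MvPowerSeries (Fin N) K :=
  fun l =>
    if (fun i => l i) ∈ LplusSet a then
      (-1 : K) ^ (∑ i : Fin N, l i) * (Nat.multinomial Finset.univ l : K)
    else 0

/-- The truncation `Φ_1` of `Φ`, as a formal power series in the variables `λ_i/λ_0`. -/
noncomputable def Phi1Series (p : ℕ) {n N : ℕ} (a : Fin (N + 1) → Fin n → ℤ)
    (K : Type*) [Field K] : MvPowerSeries (Fin N) K :=
  fun l =>
    if (fun i => l i) ∈ LplusSet a ∧ ∑ i : Fin N, l i ≤ p - 1 then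
      (-1 : K) ^ (∑ i : Fin N, l i) * (Nat.multinomial Finset.univ l : K)
    else 0

/-- `B_μ(λ_0, …, λ_N)` as a function of `λ` (a finite sum; `finsum` junk value `0`
is irrelevant since the relevant index set is finite). -/
noncomputable def Bfull (p : ℕ) {n N : ℕ} (a : Fin (N + 1) → Fin n → ℤ)
    {K : Type*} [Field K] (π : K) (μ : Fin (n + 1) → ℤ) (lam : Fin (N + 1) → K) : K :=
  finsum fun ν : Fin (N + 1) → ℕ =>
    if ∑ j, ν j • hat (a j) = μ then
      (∏ j, dworkB p π (ν j)) * ∏ j, lam j ^ ν j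
    else 0

end AHG

open scoped BigOperators Classical

/-!
Write `y_i = λ_i/λ_0`. In an ultrametric field every integer has norm at most `1`, so the
term of `Φ(λ)` indexed by `l` has norm at most `r ^ (l_1 + ⋯ + l_N)`, where `r = max ‖y_i‖ < 1`.
The terms therefore tend to `0`, which suffices for summability in a complete ultrametric
field. The term at `l = 0` equals `1`, every other term has norm at most `r < 1`, hence so
does their sum, and the strict ultrametric inequality gives `‖Φ(λ)‖ = 1`.
-/

open Filter Topology

section PowerBounds

variable {ι : Type*} [Fintype ι]

lemma exists_forall_norm_le_lt_one {K : Type*} [SeminormedAddCommGroup K] {y : ι → K}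
    (hy : ∀ i, ‖y i‖ < 1) : ∃ r : ℝ, 0 ≤ r ∧ r < 1 ∧ ∀ i, ‖y i‖ ≤ r := by
  refine ⟨(Finset.univ.sup fun i => ‖y i‖₊ : NNReal), NNReal.coe_nonneg _, ?_, fun i => ?_⟩
  · exact NNReal.coe_lt_one.2 <| (Finset.sup_lt_iff (by simp)).2 fun i _ => mod_cast hy i
  · exact_mod_cast Finset.le_sup (f := fun i => ‖y i‖₊) (Finset.mem_univ i)

lemma norm_prod_pow_le_pow_sum {K : Type*} [NormedCommRing K] [NormOneClass K]
    [NormMulClass K] {y : ι → K} {r : ℝ} (hy : ∀ i, ‖y i‖ ≤ r) (l : ι → ℕ) :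
    ‖∏ i, y i ^ l i‖ ≤ r ^ ∑ i, l i := by
  rw [norm_prod, ← Finset.prod_pow_eq_pow_sum]
  refine Finset.prod_le_prod (fun i _ => norm_nonneg _) fun i _ => ?_
  rw [norm_pow]
  exact pow_le_pow_left₀ (norm_nonneg _) (hy i) _

lemma tendsto_sum_cofinite_atTop : Tendsto (fun l : ι → ℕ => ∑ i, l i) cofinite atTop := by
  refine tendsto_atTop.2 fun C => ?_
  refine (Set.finite_Iic fun _ : ι => C).subset fun l hl i => ?_
  have hl : ∑ j, l j < C := by simpa using hl
  exact (Finset.single_le_sum (fun j _ => Nat.zero_le (l j)) (Finset.mem_univ i)).trans hl.le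

lemma tendsto_cofinite_zero_of_norm_le_pow_sum {E : Type*} [SeminormedAddCommGroup E]
    {f : (ι → ℕ) → E} {r : ℝ} (hr0 : 0 ≤ r) (hr1 : r < 1)
    (hf : ∀ l, ‖f l‖ ≤ r ^ ∑ i, l i) : Tendsto f cofinite (𝓝 0) :=
  squeeze_zero_norm hf
    ((tendsto_pow_atTop_nhds_zero_of_lt_one hr0 hr1).comp tendsto_sum_cofinite_atTop)

end PowerBounds

lemma IsUltrametricDist.norm_tsum_eq_of_forall_ne_le {M ι : Type*} [NormedAddCommGroup M]
    [IsUltrametricDist M] {f : ι → M} (hf : Summable f) {i₀ : ι} {r : ℝ} (hr0 : 0 ≤ r)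
    (hr : r < ‖f i₀‖) (h : ∀ i, i ≠ i₀ → ‖f i‖ ≤ r) : ‖∑' i, f i‖ = ‖f i₀‖ := by
  have hrest : ‖∑' i, if i = i₀ then 0 else f i‖ ≤ r :=
    norm_tsum_le_of_forall_le_of_nonneg hr0 fun i => by
      by_cases hi : i = i₀
      · simp [hi, hr0]
      · simpa [hi] using h i hi
  rw [hf.tsum_eq_add_tsum_ite i₀,
    norm_add_eq_max_of_norm_ne_norm (hrest.trans_lt hr).ne', max_eq_left (hrest.trans hr.le)]

theorem summable_and_norm_tsum_eq_one {ι K : Type*} [Fintype ι] [NormedField K]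
    [IsUltrametricDist K] [CompleteSpace K] {s : Set (ι → ℕ)} (hs : 0 ∈ s)
    {c : (ι → ℕ) → K} (hc : ∀ l, ‖c l‖ ≤ 1) (hc0 : c 0 = 1) {y : ι → K}
    (hy : ∀ i, ‖y i‖ < 1) :
    Summable (fun l : s => c l * ∏ i, y i ^ l.1 i) ∧
      ‖∑' l : s, c l * ∏ i, y i ^ l.1 i‖ = 1 := by
  obtain ⟨r, hr0, hr1, hyr⟩ := exists_forall_norm_le_lt_one hy
  have hterm (l : ι → ℕ) : ‖c l * ∏ i, y i ^ l i‖ ≤ r ^ ∑ i, l i := by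
    rw [norm_mul]
    simpa using mul_le_mul (hc l) (norm_prod_pow_le_pow_sum hyr l) (norm_nonneg _) zero_le_one
  have hsum : Summable (fun l : s => c l * ∏ i, y i ^ l.1 i) :=
    NonarchimedeanAddGroup.summable_of_tendsto_cofinite_zero <|
      (tendsto_cofinite_zero_of_norm_le_pow_sum hr0 hr1 hterm).comp
        Subtype.val_injective.tendsto_cofinite
  have hrest (l : s) (hl : l ≠ ⟨0, hs⟩) : ‖c l * ∏ i, y i ^ l.1 i‖ ≤ r := by
    obtain ⟨i, hi⟩ : ∃ i, l.1 i ≠ 0 := by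
      by_contra! h
      exact hl (Subtype.ext (funext h))
    have hpos : 1 ≤ ∑ i, l.1 i :=
      (Nat.one_le_iff_ne_zero.2 hi).trans (Finset.single_le_sum (by simp) (Finset.mem_univ i))
    exact (hterm l).trans ((pow_le_pow_of_le_one hr0 hr1.le hpos).trans (pow_one r).le)
  have hconst : c (0 : ι → ℕ) * ∏ i, y i ^ (0 : ι → ℕ) i = 1 := by simp [hc0]
  refine ⟨hsum, ?_⟩
  rw [IsUltrametricDist.norm_tsum_eq_of_forall_ne_le hsum hr0 ?_ hrest, hconst, norm_one]
  rwa [hconst, norm_one]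

theorem stmt_1_general {K : Type*} [NormedField K] [IsUltrametricDist K] [CompleteSpace K]
    (n N : ℕ) (a : Fin (N + 1) → Fin n → ℤ)
    (lam : Fin (N + 1) → K) (hlam : lam ∈ AHG.Dopen (N := N) (K := K)) :
    Summable (fun l : AHG.LplusSet a =>
      (-1 : K) ^ (∑ i : Fin N, l.1 i) * (Nat.multinomial Finset.univ l.1 : K) *
        ∏ i : Fin N, (lam i.succ / lam 0) ^ l.1 i) ∧
    ‖∑' l : AHG.LplusSet a,
        (-1 : K) ^ (∑ i : Fin N, l.1 i) * (Nat.multinomial Finset.univ l.1 : K) *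
          ∏ i : Fin N, (lam i.succ / lam 0) ^ l.1 i‖ = 1 ∧
    (∑' l : AHG.LplusSet a,
        (-1 : K) ^ (∑ i : Fin N, l.1 i) * (Nat.multinomial Finset.univ l.1 : K) *
          ∏ i : Fin N, (lam i.succ / lam 0) ^ l.1 i) ≠ 0 := by
  have hzero : (0 : Fin N → ℕ) ∈ AHG.LplusSet a := by simp [AHG.LplusSet]
  have hcoeff (l : Fin N → ℕ) :
      ‖(-1 : K) ^ (∑ i, l i) * (Nat.multinomial Finset.univ l : K)‖ ≤ 1 := by
    simpa using IsUltrametricDist.norm_natCast_le_one K (Nat.multinomial Finset.univ l)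
  obtain ⟨hsum, hnorm⟩ := summable_and_norm_tsum_eq_one hzero hcoeff
    (by simp [Nat.multinomial]) hlam.2
  exact ⟨hsum, hnorm, norm_ne_zero_iff.1 (hnorm ▸ one_ne_zero)⟩

/-- for `λ ∈ 𝒟` the family of terms of `Φ(λ)` is summable, and the sum has
norm `1`; in particular it is nonzero. -/
theorem stmt_1 (p : ℕ) [Fact p.Prime] (hp2 : p ≠ 2)
    {K : Type*} [NormedField K] [IsUltrametricDist K] [CompleteSpace K] [IsAlgClosed K]
    (ι : ℚ_[p] →+* K) (hι : ∀ x, ‖ι x‖ = ‖x‖)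
    (n N : ℕ) (hn : 0 < n) (hN : 0 < N) (a : Fin (N + 1) → Fin n → ℤ)
    (lam : Fin (N + 1) → K) (hlam : lam ∈ AHG.Dopen (N := N) (K := K)) :
    Summable (fun l : AHG.LplusSet a =>
      (-1 : K) ^ (∑ i : Fin N, l.1 i) * (Nat.multinomial Finset.univ l.1 : K) *
        ∏ i : Fin N, (lam i.succ / lam 0) ^ l.1 i) ∧
    ‖∑' l : AHG.LplusSet a,
        (-1 : K) ^ (∑ i : Fin N, l.1 i) * (Nat.multinomial Finset.univ l.1 : K) *
          ∏ i : Fin N, (lam i.succ / lam 0) ^ l.1 i‖ = 1 ∧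
    (∑' l : AHG.LplusSet a,
        (-1 : K) ^ (∑ i : Fin N, l.1 i) * (Nat.multinomial Finset.univ l.1 : K) *
          ∏ i : Fin N, (lam i.succ / lam 0) ^ l.1 i) ≠ 0 :=
  stmt_1_general n N a lam hlam
end

section
/- Every coefficient b_i of the Dwork series θ satisfies ‖b_i‖ ≤ p^{−i(p−1)/p²}. -/
open scoped BigOperators Classical

open scoped BigOperators Classical

/-!
Since `π ^ p / p = -π`, the Dwork series is `θ(t) = G(πt)` for `G = exp (X + X ^ p / p)` over
`ℚ_[p]`, so `b_i = π ^ i g_i` with `‖π‖ = p ^ (-1 / (p - 1))`. Now `G` is the Artin–Hasse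
exponential `E = exp (∑ⱼ X ^ (p ^ j) / p ^ j)` times the factors `exp (-X ^ (p ^ j) / p ^ j)`,
`j ≥ 2`. The series `E` has integral coefficients by Dwork's lemma, because
`E ^ p = exp (p X) · E(X ^ p)` and `exp (p X) ≡ 1 mod p`. The coefficient of `X ^ (p ^ j k)` in
`exp (-X ^ (p ^ j) / p ^ j)` has norm `p ^ (j k + v_p(k!)) ≤ p ^ (c p ^ j k)` with
`c = (2p - 1) / (p ^ 2 (p - 1))`, so `‖g_i‖ ≤ p ^ (c i)`; finally `-1 / (p - 1) + c` is
`-(p - 1) / p ^ 2`.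
-/

open PowerSeries Finset

namespace PowerSeries

section Trunc

variable {R : Type*} [CommRing R] {n : ℕ} {f g : R⟦X⟧}

theorem trunc_pow_eq_of_trunc_eq (h : trunc n f = trunc n g) (k : ℕ) :
    trunc n (f ^ k) = trunc n (g ^ k) := by
  rw [← trunc_trunc_pow, h, trunc_trunc_pow]

theorem trunc_mul_eq_of_trunc_eq (h : trunc n f = trunc n g) (φ : R⟦X⟧) :
    trunc n (φ * f) = trunc n (φ * g) := by
  rw [← trunc_mul_trunc, h, trunc_mul_trunc]

theorem trunc_expand_eq_of_trunc_eq (h : trunc n f = trunc n g) (r : ℕ) (hr : r ≠ 0) :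
    trunc n (expand r hr f) = trunc n (expand r hr g) := by
  ext k
  simp only [coeff_trunc, coeff_expand]
  split_ifs with hk <;> try rfl
  have hkr : k / r < n := (k.div_le_self r).trans_lt hk
  rw [← coeff_coe_trunc_of_lt hkr, h, coeff_coe_trunc_of_lt hkr]

theorem coeff_pow_sub_coeff_pow_of_trunc_eq {m : ℕ} (hm : 0 < m) (hf : constantCoeff f = 1)
    (h : trunc m f = trunc m g) (n : ℕ) :
    coeff m (f ^ n) - coeff m (g ^ n) = n * (coeff m f - coeff m g) := by
  have hfg : ∀ d < m, coeff d f = coeff d g := fun d hd => by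
    rw [← coeff_coe_trunc_of_lt hd, h, coeff_coe_trunc_of_lt hd]
  have hg : constantCoeff g = 1 := by
    rw [← coeff_zero_eq_constantCoeff_apply, ← hfg 0 hm, coeff_zero_eq_constantCoeff_apply, hf]
  obtain ⟨h, hh⟩ : X ^ m ∣ f - g := X_pow_dvd_iff.2 fun d hd => by rw [map_sub, hfg d hd, sub_self]
  have hcoeff : ∀ φ : R⟦X⟧, coeff m (X ^ m * φ) = constantCoeff φ := fun φ => by
    rw [coeff_X_pow_mul', if_pos le_rfl, Nat.sub_self, coeff_zero_eq_constantCoeff_apply]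
  rw [← map_sub, ← map_sub, ← geom_sum₂_mul, hh, mul_left_comm, hcoeff, hcoeff, map_mul, map_sum]
  simp [hf, hg]

theorem eq_of_forall_trunc_eq {s : ℕ → ℕ} (hs : ∀ m, m < s m)
    (h : ∀ J, trunc (s J) f = trunc (s J) g) : f = g := by
  ext m
  rw [← coeff_coe_trunc_of_lt (hs m), h, coeff_coe_trunc_of_lt (hs m)]

theorem coeff_mul_expand (r : ℕ) (hr : r ≠ 0) (f g : R⟦X⟧) (n : ℕ) :
    coeff n (f * expand r hr g) =
      ∑ k ∈ range (n / r + 1), coeff (n - r * k) f * coeff k g := by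
  have hr0 : 0 < r := Nat.pos_of_ne_zero hr
  rw [coeff_mul, ← Nat.sum_antidiagonal_swap]
  simp only [Prod.fst_swap, Prod.snd_swap, coeff_expand, mul_ite, mul_zero]
  rw [Nat.sum_antidiagonal_eq_sum_range_succ_mk, ← sum_filter]
  refine sum_nbij' (· / r) (r * ·) ?_ ?_ ?_ ?_ ?_
  · simp only [mem_filter, mem_range]
    rintro x ⟨hx, k, rfl⟩
    rw [Nat.mul_div_cancel_left _ hr0, Nat.lt_succ_iff, Nat.le_div_iff_mul_le hr0, mul_comm]
    omega
  · simp only [mem_filter, mem_range, Nat.lt_succ_iff, Nat.le_div_iff_mul_le hr0]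
    intro k hk
    exact ⟨by rw [mul_comm]; omega, dvd_mul_right r k⟩
  · simp only [mem_filter]
    rintro x ⟨-, k, rfl⟩
    rw [Nat.mul_div_cancel_left _ hr0]
  · intro k _
    exact Nat.mul_div_cancel_left _ hr0
  · simp only [mem_filter]
    rintro x ⟨-, k, rfl⟩
    rw [Nat.mul_div_cancel_left _ hr0]

end Trunc

section Ultrametric

variable {R : Type*} [NormedCommRing R]

def CoeffsBoundedBy (C : ℝ) (f : R⟦X⟧) : Prop := ∀ n, ‖coeff n f‖ ≤ C ^ n

variable {C : ℝ} {f g : R⟦X⟧}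

theorem CoeffsBoundedBy.nonneg (hf : CoeffsBoundedBy C f) : 0 ≤ C :=
  (norm_nonneg _).trans (pow_one C ▸ hf 1)

theorem coeffsBoundedBy_one [NormOneClass R] (hC : 0 ≤ C) : CoeffsBoundedBy C (1 : R⟦X⟧) := by
  intro n
  rw [coeff_one]
  split_ifs with hn
  · simp [hn]
  · simpa using pow_nonneg hC n

variable [IsUltrametricDist R]

theorem norm_coeff_mul_le {φ ψ : R⟦X⟧} {n : ℕ} {r s : ℝ}
    (hφ : ∀ a ≤ n, ‖coeff a φ‖ ≤ r) (hψ : ∀ b ≤ n, ‖coeff b ψ‖ ≤ s) :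
    ‖coeff n (φ * ψ)‖ ≤ r * s := by
  have hr : 0 ≤ r := (norm_nonneg _).trans (hφ 0 n.zero_le)
  have hs : 0 ≤ s := (norm_nonneg _).trans (hψ 0 n.zero_le)
  rw [coeff_mul]
  refine IsUltrametricDist.norm_sum_le_of_forall_le_of_nonneg (mul_nonneg hr hs) ?_
  rintro ⟨a, b⟩ hab
  have hab := mem_antidiagonal.1 hab
  exact (norm_mul_le _ _).trans
    (mul_le_mul (hφ a (by omega)) (hψ b (by omega)) (norm_nonneg _) hr)

theorem CoeffsBoundedBy.mul (hf : CoeffsBoundedBy C f) (hg : CoeffsBoundedBy C g) :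
    CoeffsBoundedBy C (f * g) := by
  intro n
  rw [coeff_mul]
  refine IsUltrametricDist.norm_sum_le_of_forall_le_of_nonneg (pow_nonneg hf.nonneg n) ?_
  rintro ⟨a, b⟩ hab
  rw [← mem_antidiagonal.1 hab, pow_add]
  exact (norm_mul_le _ _).trans
    (mul_le_mul (hf a) (hg b) (norm_nonneg _) (pow_nonneg hf.nonneg a))

theorem CoeffsBoundedBy.prod [NormOneClass R] {ι : Type*} {s : Finset ι} {f : ι → R⟦X⟧}
    (hC : 0 ≤ C) (hf : ∀ i ∈ s, CoeffsBoundedBy C (f i)) :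
    CoeffsBoundedBy C (∏ i ∈ s, f i) :=
  prod_induction _ _ (fun _ _ => CoeffsBoundedBy.mul) (coeffsBoundedBy_one hC) hf

end Ultrametric

end PowerSeries

section Dwork

variable {p : ℕ} [hp : Fact p.Prime]

theorem PadicInt.dvd_coeff_pow_sub_expand (Φ : ℤ_[p]⟦X⟧) (n : ℕ) :
    (p : ℤ_[p]) ∣ coeff n (Φ ^ p - expand p hp.out.ne_zero Φ) := by
  have hfrob : ∀ Ψ : (ZMod p)⟦X⟧, expand p hp.out.ne_zero Ψ = Ψ ^ p := fun Ψ => by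
    have := MvPowerSeries.map_frobenius_expand p hp.out.ne_zero (f := Ψ)
    rwa [ZMod.frobenius_zmod, MvPowerSeries.map_id, RingHom.id_apply] at this
  have hΦ : toZMod (coeff n (Φ ^ p - expand p hp.out.ne_zero Φ)) = 0 := by
    rw [← coeff_map, map_sub, map_pow, map_expand, hfrob, sub_self, map_zero]
  rwa [← RingHom.mem_ker, PadicInt.ker_toZMod, PadicInt.maximalIdeal_eq_span_p,
    Ideal.mem_span_singleton] at hΦ

theorem Padic.norm_coeff_pow_sub_expand_le {φ : ℚ_[p]⟦X⟧} (hφ : ∀ n, ‖coeff n φ‖ ≤ 1)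
    (n : ℕ) : ‖coeff n (φ ^ p - expand p hp.out.ne_zero φ)‖ ≤ (p : ℝ)⁻¹ := by
  set Φ : ℤ_[p]⟦X⟧ := PowerSeries.mk fun n => (⟨coeff n φ, hφ n⟩ : ℤ_[p])
  have hΦ : map PadicInt.Coe.ringHom Φ = φ := by
    ext k; exact congrArg PadicInt.Coe.ringHom (coeff_mk k _)
  obtain ⟨y, hy⟩ := PadicInt.dvd_coeff_pow_sub_expand Φ n
  rw [← hΦ, ← map_pow, ← map_expand, ← map_sub, coeff_map, hy]
  change ‖((p * y : ℤ_[p]) : ℚ_[p])‖ ≤ _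
  rw [← PadicInt.norm_def, norm_mul, PadicInt.norm_p]
  exact mul_le_of_le_one_right (inv_nonneg.2 p.cast_nonneg) y.norm_le_one

theorem Padic.norm_coeff_le_one_of_pow_eq_mul_expand {f u : ℚ_[p]⟦X⟧}
    (hf : constantCoeff f = 1) (hu : ∀ n, ‖coeff n (u - 1)‖ ≤ (p : ℝ)⁻¹)
    (hfu : f ^ p = u * expand p hp.out.ne_zero f) (m : ℕ) : ‖coeff m f‖ ≤ 1 := by
  induction m using Nat.strong_induction_on with | _ m ih
  rcases m.eq_zero_or_pos with rfl | hm
  · rw [coeff_zero_eq_constantCoeff_apply, hf, norm_one]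
  -- With `q` the (integral) truncation of `f` below `m`, `p • [X^m] f = [X^m] (f^p - q^p)`,
  -- while both `f^p` and `q^p` agree with `f(X^p)` at `X^m` modulo `p`.
  have hdiv : ∀ k ≤ m, k / p < m := fun k hk =>
    Nat.div_lt_of_lt_mul (by nlinarith [hp.out.two_le])
  set q : ℚ_[p]⟦X⟧ := (trunc m f : ℚ_[p]⟦X⟧)
  have hcoeff_q : ∀ k, coeff k q = if k < m then coeff k f else 0 := fun k => by
    rw [Polynomial.coeff_coe, coeff_trunc]
  have hq : ∀ k, ‖coeff k q‖ ≤ 1 := fun k => by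
    rw [hcoeff_q]
    split_ifs with hk
    exacts [ih k hk, by simp]
  have hpow : coeff m (f ^ p) - coeff m (q ^ p) = p * coeff m f := by
    rw [coeff_pow_sub_coeff_pow_of_trunc_eq hm hf (trunc_trunc f).symm, hcoeff_q,
      if_neg (lt_irrefl m), sub_zero]
  have hfrob_f : ‖coeff m (f ^ p) - coeff m (expand p hp.out.ne_zero f)‖ ≤ (p : ℝ)⁻¹ := by
    rw [← map_sub, hfu, ← sub_one_mul, ← mul_one (p : ℝ)⁻¹]
    refine norm_coeff_mul_le (fun a _ => hu a) fun b hb => ?_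
    rw [coeff_expand]
    split_ifs
    exacts [ih _ (hdiv b hb), by simp]
  have hfrob_q := Padic.norm_coeff_pow_sub_expand_le hq m
  have hexpand : coeff m (expand p hp.out.ne_zero q) = coeff m (expand p hp.out.ne_zero f) := by
    rw [coeff_expand, coeff_expand, hcoeff_q, if_pos (hdiv m le_rfl)]
  rw [map_sub, hexpand] at hfrob_q
  have hpa : ‖(p : ℚ_[p]) * coeff m f‖ ≤ (p : ℝ)⁻¹ := by
    rw [← hpow, ← sub_sub_sub_cancel_right _ _ (coeff m (expand p hp.out.ne_zero f)),
      sub_eq_add_neg]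
    refine (IsUltrametricDist.norm_add_le_max _ _).trans ?_
    rw [norm_neg]
    exact max_le hfrob_f hfrob_q
  rw [norm_mul, Padic.norm_p] at hpa
  exact (mul_le_iff_le_one_right (inv_pos.2 (Nat.cast_pos.2 hp.out.pos))).1 hpa

end Dwork

theorem add_two_mul_sub_one_add_one_le {P : ℝ} (hP : 1 ≤ P) (i : ℕ) :
    (i + 2) * (P - 1) + 1 ≤ (2 * P - 1) * P ^ i := by
  induction i with
  | zero => norm_num; linarith
  | succ i ih =>
    have h1 : 1 ≤ (2 * P - 1) * P ^ i :=
      one_le_mul_of_one_le_of_one_le (by linarith) (one_le_pow₀ hP)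
    have h2 := mul_le_mul_of_nonneg_right h1 (by linarith : 0 ≤ P - 1)
    push_cast
    rw [pow_succ]
    nlinarith

namespace Padic

variable {p : ℕ} [hp : Fact p.Prime]

theorem lt_pow_succ_self (m : ℕ) : m < p ^ (m + 1) :=
  (Nat.lt_pow_self hp.out.one_lt).trans (Nat.pow_lt_pow_succ hp.out.one_lt)

theorem norm_factorial_inv (n : ℕ) :
    ‖((n.factorial : ℚ_[p]))⁻¹‖ = (p : ℝ) ^ padicValNat p n.factorial := by
  rw [norm_inv, norm_eq_zpow_neg_valuation (Nat.cast_ne_zero.2 n.factorial_ne_zero),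
    valuation_natCast, zpow_neg, inv_inv, zpow_natCast]

noncomputable def expXPow (c : ℚ_[p]) (j : ℕ) : ℚ_[p]⟦X⟧ :=
  expand (p ^ j) (pow_ne_zero j hp.out.ne_zero) (rescale c (exp ℚ_[p]))

theorem coeff_expXPow (c : ℚ_[p]) (j n : ℕ) :
    coeff n (expXPow c j) =
      if p ^ j ∣ n then c ^ (n / p ^ j) * ((n / p ^ j).factorial : ℚ_[p])⁻¹ else 0 := by
  simp [expXPow, coeff_expand]

theorem expXPow_mul_expXPow (c d : ℚ_[p]) (j : ℕ) :
    expXPow c j * expXPow d j = expXPow (c + d) j := by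
  rw [expXPow, expXPow, ← map_mul, exp_mul_exp_eq_exp_add, expXPow]

theorem expXPow_zero (j : ℕ) : expXPow (0 : ℚ_[p]) j = 1 := by
  simp [expXPow, rescale_zero]

theorem expXPow_pow (c : ℚ_[p]) (j k : ℕ) :
    expXPow c j ^ k = expXPow ((k : ℚ_[p]) * c) j := by
  rw [expXPow, expXPow, ← map_pow, ← map_pow, exp_pow_eq_rescale_exp, rescale_rescale]

theorem expand_expXPow (c : ℚ_[p]) (j : ℕ) :
    expand p hp.out.ne_zero (expXPow c j) = expXPow c (j + 1) := by
  simp only [expXPow, ← expand_mul, pow_succ']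

theorem trunc_expXPow (c : ℚ_[p]) (j : ℕ) : trunc (p ^ j) (expXPow c j) = 1 := by
  ext n
  rw [coeff_trunc, coeff_expXPow, Polynomial.coeff_one]
  rcases eq_or_ne n 0 with rfl | hn
  · simp [hp.out.pos]
  rw [if_neg hn]
  split_ifs with hlt hdvd
  exacts [absurd (Nat.eq_zero_of_dvd_of_lt hdvd hlt) hn, rfl, rfl]

theorem norm_coeff_expXPow_natCast_sub_one_le (n : ℕ) :
    ‖coeff n (expXPow (p : ℚ_[p]) 0 - 1)‖ ≤ (p : ℝ)⁻¹ := by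
  rcases eq_or_ne n 0 with rfl | hn
  · simp [map_sub, coeff_expXPow]
  rw [map_sub, coeff_expXPow, coeff_one, if_neg hn, sub_zero, pow_zero, if_pos (one_dvd n),
    Nat.div_one, norm_mul, norm_pow, norm_p, norm_factorial_inv]
  set v := padicValNat p n.factorial
  have hv : v + 1 ≤ n := by
    have h1 : (p - 1) * v < n := sub_one_mul_padicValNat_factorial_lt_of_ne_zero (p := p) hn
    have h2 := Nat.le_mul_of_pos_left v (Nat.sub_pos_of_lt hp.out.one_lt)
    omega
  have hp1 : (1 : ℝ) ≤ p := by exact_mod_cast hp.out.one_lt.le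
  calc ((p : ℝ)⁻¹) ^ n * (p : ℝ) ^ v
      ≤ ((p : ℝ)⁻¹) ^ (v + 1) * (p : ℝ) ^ v :=
        mul_le_mul_of_nonneg_right
          (pow_le_pow_of_le_one (by positivity) (inv_le_one_of_one_le₀ hp1) hv) (by positivity)
    _ = (p : ℝ)⁻¹ := by
        rw [pow_succ, mul_right_comm, inv_pow, inv_mul_cancel₀ (by positivity), one_mul]

variable (p) in
noncomputable def artinHasseTrunc (J : ℕ) : ℚ_[p]⟦X⟧ :=
  ∏ j ∈ range (J + 1), expXPow ((p : ℚ_[p]) ^ j)⁻¹ j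

theorem artinHasseTrunc_succ_pow (J : ℕ) :
    artinHasseTrunc p (J + 1) ^ p =
      expXPow (p : ℚ_[p]) 0 * expand p hp.out.ne_zero (artinHasseTrunc p J) := by
  have hp0 : (p : ℚ_[p]) ≠ 0 := Nat.cast_ne_zero.2 hp.out.ne_zero
  simp only [artinHasseTrunc, ← prod_pow, expXPow_pow, map_prod, expand_expXPow]
  rw [prod_range_succ', mul_comm]
  congr 1
  · simp
  · exact prod_congr rfl fun j _ => by rw [pow_succ', mul_inv, mul_inv_cancel_left₀ hp0]

theorem trunc_artinHasseTrunc_of_le {J K : ℕ} (hJK : J ≤ K) :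
    trunc (p ^ (J + 1)) (artinHasseTrunc p K) = trunc (p ^ (J + 1)) (artinHasseTrunc p J) := by
  induction K, hJK using Nat.le_induction with
  | base => rfl
  | succ K hJK ih =>
    have hle : p ^ (J + 1) ≤ p ^ (K + 1) := Nat.pow_le_pow_right hp.out.pos (by omega)
    have hE : trunc (p ^ (J + 1)) (expXPow ((p : ℚ_[p]) ^ (K + 1))⁻¹ (K + 1)) =
        trunc (p ^ (J + 1)) 1 := by
      rw [← trunc_trunc_of_le _ hle, trunc_expXPow, Polynomial.coe_one]
    rw [artinHasseTrunc, prod_range_succ, ← artinHasseTrunc, trunc_mul_eq_of_trunc_eq hE,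
      mul_one, ih]

-- `exp (∑ⱼ X ^ (p ^ j) / p ^ j)`, as the coefficientwise limit of the partial products.
variable (p) in
noncomputable def artinHasse : ℚ_[p]⟦X⟧ :=
  PowerSeries.mk fun m => coeff m (artinHasseTrunc p m)

theorem trunc_artinHasse (J : ℕ) :
    trunc (p ^ (J + 1)) (artinHasse p) = trunc (p ^ (J + 1)) (artinHasseTrunc p J) := by
  ext m
  rw [coeff_trunc, coeff_trunc]
  split_ifs with hm
  · have hm' := lt_pow_succ_self (p := p) m
    rw [artinHasse, coeff_mk, ← coeff_coe_trunc_of_lt hm',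
      ← trunc_artinHasseTrunc_of_le (le_max_left m J), coeff_coe_trunc_of_lt hm',
      ← coeff_coe_trunc_of_lt hm, trunc_artinHasseTrunc_of_le (le_max_right m J),
      coeff_coe_trunc_of_lt hm]
  · rfl

theorem artinHasse_pow :
    artinHasse p ^ p = expXPow (p : ℚ_[p]) 0 * expand p hp.out.ne_zero (artinHasse p) := by
  refine eq_of_forall_trunc_eq (s := fun J => p ^ (J + 1)) lt_pow_succ_self fun J => ?_
  have hJ : trunc (p ^ (J + 1)) (artinHasse p) =
      trunc (p ^ (J + 1)) (artinHasseTrunc p (J + 1)) := by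
    rw [trunc_artinHasse, trunc_artinHasseTrunc_of_le J.le_succ]
  rw [trunc_pow_eq_of_trunc_eq hJ, artinHasseTrunc_succ_pow,
    trunc_mul_eq_of_trunc_eq (trunc_expand_eq_of_trunc_eq (trunc_artinHasse J) _ _)]

theorem constantCoeff_artinHasse : constantCoeff (artinHasse p) = 1 := by
  simp [← coeff_zero_eq_constantCoeff_apply, artinHasse, artinHasseTrunc, coeff_expXPow]

theorem norm_coeff_artinHasse_le_one (n : ℕ) : ‖coeff n (artinHasse p)‖ ≤ 1 :=
  norm_coeff_le_one_of_pow_eq_mul_expand constantCoeff_artinHasse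
    norm_coeff_expXPow_natCast_sub_one_le artinHasse_pow n

variable (p) in
noncomputable def dworkExponent : ℝ := (2 * p - 1) / (p ^ 2 * (p - 1))

theorem one_le_rpow_dworkExponent : 1 ≤ (p : ℝ) ^ dworkExponent p := by
  have hP : (2 : ℝ) ≤ p := by exact_mod_cast hp.out.two_le
  exact Real.one_le_rpow (by linarith)
    (div_nonneg (by linarith) (mul_nonneg (by positivity) (by linarith)))

-- The factor `j = 2` is extremal (`add_two_mul_sub_one_add_one_le` is an equality at `i = 0`);
-- it is what determines `dworkExponent`.
theorem coeffsBoundedBy_expXPow_neg_inv {j : ℕ} (hj : 2 ≤ j) :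
    CoeffsBoundedBy ((p : ℝ) ^ dworkExponent p) (expXPow (-((p : ℚ_[p]) ^ j)⁻¹) j) := by
  have hP : (2 : ℝ) ≤ p := by exact_mod_cast hp.out.two_le
  intro n
  rw [coeff_expXPow]
  split_ifs with hn
  swap
  · rw [norm_zero]; positivity
  obtain ⟨k, rfl⟩ := hn
  obtain ⟨i, rfl⟩ := Nat.exists_eq_add_of_le' hj
  set v := padicValNat p k.factorial
  have hv : ((p : ℝ) - 1) * v ≤ k := by
    rcases eq_or_ne k 0 with rfl | hk
    · simp [v]
    have := sub_one_mul_padicValNat_factorial_lt_of_ne_zero (p := p) hk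
    have hcast : ((p - 1 : ℕ) : ℝ) * v ≤ k := by exact_mod_cast this.le
    rwa [Nat.cast_sub hp.out.one_lt.le, Nat.cast_one] at hcast
  rw [Nat.mul_div_cancel_left _ (pow_pos hp.out.pos _), norm_mul, norm_factorial_inv]
  simp only [norm_pow, norm_neg, norm_inv, norm_p, inv_pow, inv_inv]
  rw [← pow_mul, ← pow_add, ← Real.rpow_natCast, ← Real.rpow_natCast _ (p ^ _ * k),
    ← Real.rpow_mul (by positivity)]
  refine Real.rpow_le_rpow_of_exponent_le (by linarith) ?_
  have key := add_two_mul_sub_one_add_one_le (by linarith : (1 : ℝ) ≤ p) i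
  rw [dworkExponent, div_mul_eq_mul_div, le_div_iff₀ (mul_pos (by positivity) (by linarith))]
  push_cast
  rw [pow_add]
  nlinarith [mul_le_mul_of_nonneg_right key (by positivity : (0 : ℝ) ≤ k * p ^ 2)]

-- `exp (X + X ^ p / p)`
variable (p) in
noncomputable def dworkExp : ℚ_[p]⟦X⟧ :=
  exp ℚ_[p] * expand p hp.out.ne_zero (rescale (p : ℚ_[p])⁻¹ (exp ℚ_[p]))

theorem artinHasseTrunc_eq_dworkExp_mul {J : ℕ} (hJ : 1 ≤ J) :
    artinHasseTrunc p J = dworkExp p * ∏ j ∈ Ico 2 (J + 1), expXPow ((p : ℚ_[p]) ^ j)⁻¹ j := by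
  rw [artinHasseTrunc, ← prod_range_mul_prod_Ico _ (by omega : 2 ≤ J + 1)]
  simp [dworkExp, expXPow, prod_range_succ]

theorem dworkExp_eq_artinHasseTrunc_mul {J : ℕ} (hJ : 1 ≤ J) :
    dworkExp p =
      artinHasseTrunc p J * ∏ j ∈ Ico 2 (J + 1), expXPow (-((p : ℚ_[p]) ^ j)⁻¹) j := by
  rw [artinHasseTrunc_eq_dworkExp_mul hJ, mul_assoc, ← prod_mul_distrib]
  simp [expXPow_mul_expXPow, expXPow_zero]

theorem coeffsBoundedBy_dworkExp : CoeffsBoundedBy ((p : ℝ) ^ dworkExponent p) (dworkExp p) := by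
  intro i
  set P := ∏ j ∈ Ico 2 (i + 2), expXPow (-((p : ℚ_[p]) ^ j)⁻¹) j
  have hi : i < p ^ (i + 2) :=
    (lt_pow_succ_self i).trans (Nat.pow_lt_pow_right hp.out.one_lt (by omega))
  have hcoeff : coeff i (dworkExp p) = coeff i (artinHasse p * P) := by
    rw [dworkExp_eq_artinHasseTrunc_mul (by omega : 1 ≤ i + 1),
      coeff_mul_eq_coeff_trunc_mul_trunc _ _ hi, ← trunc_artinHasse,
      ← coeff_mul_eq_coeff_trunc_mul_trunc _ _ hi]
  rw [hcoeff]
  refine CoeffsBoundedBy.mul (fun n => ?_)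
    (CoeffsBoundedBy.prod (zero_le_one.trans one_le_rpow_dworkExponent) fun j hj => ?_) i
  · exact (norm_coeff_artinHasse_le_one n).trans (one_le_pow₀ one_le_rpow_dworkExponent)
  · exact coeffsBoundedBy_expXPow_neg_inv (mem_Ico.1 hj).1

theorem coeff_dworkExp (i : ℕ) :
    coeff i (dworkExp p) = ∑ k ∈ range (i / p + 1),
      ((i - p * k).factorial : ℚ_[p])⁻¹ * (((p : ℚ_[p])⁻¹) ^ k * (k.factorial : ℚ_[p])⁻¹) := by
  simp [dworkExp, coeff_mul_expand]

theorem dworkB_eq_pow_mul_coeff_dworkExp {K : Type*} [Field K] (ι : ℚ_[p] →+* K) {π : K}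
    (hπ : π ^ (p - 1) = -(p : K)) (i : ℕ) :
    AHG.dworkB p π i = π ^ i * ι (coeff i (dworkExp p)) := by
  have hpK : (p : K) ≠ 0 := by
    rw [← map_natCast ι]; exact (map_ne_zero ι).2 (Nat.cast_ne_zero.2 hp.out.ne_zero)
  have hrange : (range (i + 1)).filter (fun k => p * k ≤ i) = range (i / p + 1) := by
    ext k
    simp only [mem_filter, mem_range, Nat.lt_succ_iff, Nat.le_div_iff_mul_le hp.out.pos]
    constructor
    · rintro ⟨-, h⟩; rwa [mul_comm]
    · intro h; exact ⟨by nlinarith [hp.out.pos], by rwa [mul_comm]⟩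
  rw [coeff_dworkExp, map_sum, mul_sum, AHG.dworkB, ← sum_filter, hrange]
  refine sum_congr rfl fun k hk => ?_
  have hk : p * k ≤ i := by
    rw [← hrange] at hk; exact (mem_filter.1 hk).2
  have hπi : π ^ i = (-1) ^ k * π ^ (i - p * k + k) * (p : K) ^ k := by
    have hexp : i = i - p * k + k + (p - 1) * k := by
      rw [Nat.sub_one_mul]; have := Nat.le_mul_of_pos_left k hp.out.pos; omega
    calc π ^ i = π ^ (i - p * k + k) * (π ^ (p - 1)) ^ k := by
          rw [← pow_mul, ← pow_add, ← hexp]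
      _ = _ := by rw [hπ, neg_pow]; ring
  simp only [map_mul, map_inv₀, map_pow, map_natCast, inv_pow]
  rw [hπi]
  field_simp

theorem norm_eq_rpow_of_pow_sub_one_eq_neg {K : Type*} [NormedField K]
    (hpK : ‖(p : K)‖ = (p : ℝ)⁻¹) {π : K} (hπ : π ^ (p - 1) = -(p : K)) :
    ‖π‖ = (p : ℝ) ^ (-((p : ℝ) - 1)⁻¹) := by
  have hπp : ‖π‖ ^ (p - 1) = (p : ℝ)⁻¹ := by rw [← norm_pow, hπ, norm_neg, hpK]
  rw [← Real.pow_rpow_inv_natCast (norm_nonneg π) (Nat.sub_ne_zero_of_lt hp.out.one_lt), hπp,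
    Real.inv_rpow p.cast_nonneg, ← Real.rpow_neg p.cast_nonneg, Nat.cast_sub hp.out.one_lt.le,
    Nat.cast_one]

end Padic

theorem stmt_2_general (p : ℕ) [Fact p.Prime]
    {K : Type*} [NormedField K]
    (ι : ℚ_[p] →+* K) (hι : ∀ x, ‖ι x‖ = ‖x‖)
    (π : K) (hπ : π ^ (p - 1) = -(p : K))
    (i : ℕ) :
    ‖AHG.dworkB p π i‖ ≤ (p : ℝ) ^ (-((i : ℝ) * ((p : ℝ) - 1)) / (p : ℝ) ^ 2) := by
  have hP : (1 : ℝ) < p := by exact_mod_cast (Fact.out : p.Prime).one_lt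
  have hpK : ‖(p : K)‖ = (p : ℝ)⁻¹ := by rw [← map_natCast ι, hι, Padic.norm_p]
  rw [Padic.dworkB_eq_pow_mul_coeff_dworkExp ι hπ, norm_mul, norm_pow, hι,
    Padic.norm_eq_rpow_of_pow_sub_one_eq_neg hpK hπ]
  calc ((p : ℝ) ^ (-((p : ℝ) - 1)⁻¹)) ^ i * ‖coeff i (Padic.dworkExp p)‖
      ≤ ((p : ℝ) ^ (-((p : ℝ) - 1)⁻¹)) ^ i * ((p : ℝ) ^ Padic.dworkExponent p) ^ i := by
        gcongr
        exact Padic.coeffsBoundedBy_dworkExp i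
    _ = ((p : ℝ) ^ (-((p : ℝ) - 1)⁻¹ + Padic.dworkExponent p)) ^ i := by
        rw [← mul_pow, ← Real.rpow_add (by positivity)]
    _ = _ := by
        have hP1 : (p : ℝ) - 1 ≠ 0 := by linarith
        rw [← Real.rpow_natCast, ← Real.rpow_mul (by positivity), Padic.dworkExponent]
        congr 1
        field_simp
        ring

/-- `‖b_i‖ ≤ p^{-i(p-1)/p²}` for every coefficient of the Dwork series. -/
theorem stmt_2 (p : ℕ) [Fact p.Prime] (hp2 : p ≠ 2)
    {K : Type*} [NormedField K] [IsUltrametricDist K] [CompleteSpace K] [IsAlgClosed K]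
    (ι : ℚ_[p] →+* K) (hι : ∀ x, ‖ι x‖ = ‖x‖)
    (π : K) (hπ : π ^ (p - 1) = -(p : K))
    (i : ℕ) :
    ‖AHG.dworkB p π i‖ ≤ (p : ℝ) ^ (-((i : ℝ) * ((p : ℝ) - 1)) / (p : ℝ) ^ 2) :=
  stmt_2_general p ι hι π hπ i
end

section
/- For every integer i with 0 ≤ i ≤ p−1 one has b_i = π^i/i!, and for every integer i with 0 ≤ i ≤ 2p−1 one has ‖b_i‖ ≤ ‖π‖^i = p^{−i/(p−1)}. -/
open scoped BigOperators Classical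

open scoped BigOperators Classical

/-!
For `i < p` only the term `k = 0` of `b_i = Σ_{j + pk = i} (-1)^k π^{j+k} / (j! k!)` survives.
For `i = p + j` with `j < p` there are two terms, and `π^{p-1} = -p` turns them into
`b_{p+j} = -π^{j+1} (1/((p-1)! Q) + 1/j!)` where `Q = (p+1)⋯(p+j) = (p+1).ascFactorial j`.
By Wilson's theorem `(p-1)! Q ≡ -j! (mod p)`, so the bracket has norm at most
`1/p = ‖π‖^{p-1}`.
-/

theorem Nat.Prime.dvd_factorial_add_factorial_pred_mul_ascFactorial {p : ℕ} (hp : p.Prime)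
    (j : ℕ) : p ∣ j.factorial + (p - 1).factorial * (p + 1).ascFactorial j := by
  have : Fact p.Prime := ⟨hp⟩
  have hQ : (((p + 1).ascFactorial j : ℕ) : ZMod p) = j.factorial := by
    rw [add_comm, ← Nat.one_ascFactorial]
    induction j with
    | zero => simp
    | succ j ih => simp [Nat.ascFactorial_succ, ih]
  rw [← ZMod.natCast_eq_zero_iff]
  push_cast
  rw [hQ, ZMod.wilsons_lemma]
  ring

theorem Real.pow_eq_rpow_neg_div_of_pow_eq_inv {x b : ℝ} {n : ℕ} (hx : 0 ≤ x) (hb : 0 < b)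
    (hn : n ≠ 0) (h : x ^ n = b⁻¹) (i : ℕ) : x ^ i = b ^ (-(i : ℝ) / n) := by
  have hx' : x = b ^ (-(n : ℝ)⁻¹) := by
    rw [← Real.pow_rpow_inv_natCast hx hn, h, Real.inv_rpow hb.le, Real.rpow_neg hb.le]
  rw [hx', ← Real.rpow_natCast, ← Real.rpow_mul hb.le]
  ring_nf

section PadicNorm

variable {p : ℕ} [Fact p.Prime] {K : Type*} [NormedField K] {ι : ℚ_[p] →+* K}

theorem norm_natCast_eq_padicNorm (hι : ∀ x, ‖ι x‖ = ‖x‖) (n : ℕ) :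
    ‖(n : K)‖ = ‖(n : ℚ_[p])‖ := by
  rw [← map_natCast ι, hι]

theorem norm_natCast_of_not_dvd (hι : ∀ x, ‖ι x‖ = ‖x‖) {n : ℕ} (hn : ¬ p ∣ n) :
    ‖(n : K)‖ = 1 := by
  rw [norm_natCast_eq_padicNorm hι, Padic.norm_natCast_eq_one_iff,
    (Fact.out : p.Prime).coprime_iff_not_dvd]
  exact hn

theorem norm_natCast_le_of_dvd (hι : ∀ x, ‖ι x‖ = ‖x‖) {n : ℕ} (hn : p ∣ n) :
    ‖(n : K)‖ ≤ (p : ℝ)⁻¹ := by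
  have := (Padic.norm_int_le_pow_iff_dvd (p := p) n 1).mpr
    (by simpa using Int.natCast_dvd_natCast.mpr hn)
  rw [norm_natCast_eq_padicNorm hι]
  simpa using this

theorem norm_pow_pred_eq_inv (hι : ∀ x, ‖ι x‖ = ‖x‖) {π : K} (hπ : π ^ (p - 1) = -(p : K)) :
    ‖π‖ ^ (p - 1) = (p : ℝ)⁻¹ := by
  rw [← norm_pow, hπ, norm_neg, norm_natCast_eq_padicNorm hι, Padic.norm_p]

end PadicNorm

namespace AHG

variable {p : ℕ}

section Coefficients

variable {K : Type*} [Field K] (π : K)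

theorem dworkB_of_lt {i : ℕ} (hi : i < p) : dworkB p π i = π ^ i / i.factorial := by
  rw [dworkB, Finset.sum_eq_single 0]
  · simp
  · intro k _ hk
    rw [if_neg]
    nlinarith [Nat.pos_of_ne_zero hk]
  · simp

theorem dworkB_of_le_of_lt_two_mul {i : ℕ} (hpi : p ≤ i) (hi : i < 2 * p) :
    dworkB p π i = π ^ i / i.factorial - π ^ (i - p + 1) / (i - p).factorial := by
  rw [dworkB, ← Finset.sum_subset (Finset.range_subset_range.mpr (by omega : 2 ≤ i + 1))]
  · rw [Finset.sum_range_succ, Finset.sum_range_one, if_pos (by omega), if_pos (by omega)]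
    simp [sub_eq_add_neg, neg_div]
  · intro k _ hk
    rw [if_neg]
    simp only [Finset.mem_range, not_lt] at hk
    nlinarith

theorem dworkB_prime_add [CharZero K] (hπ : π ^ (p - 1) = -(p : K)) {j : ℕ} (hj : j < p) :
    dworkB p π (p + j) = -π ^ (j + 1) *
      ((j.factorial + (p - 1).factorial * (p + 1).ascFactorial j : ℕ) : K) /
        ((p - 1).factorial * (p + 1).ascFactorial j * j.factorial) := by
  have hp0 : p ≠ 0 := by omega
  have hfact : ((p + j).factorial : K) = p * (p - 1).factorial * (p + 1).ascFactorial j := by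
    rw [← Nat.factorial_mul_ascFactorial, ← Nat.mul_factorial_pred hp0]
    push_cast
    ring
  have hπp : π ^ (p + j) = -p * π ^ (j + 1) := by
    rw [show p + j = (p - 1) + (j + 1) by omega, pow_add, hπ]
  have hQ : ((p + 1).ascFactorial j : K) ≠ 0 := by
    exact_mod_cast (Nat.ascFactorial_pos p j).ne'
  rw [dworkB_of_le_of_lt_two_mul π (by omega) (by omega), hfact, hπp, Nat.add_sub_cancel_left]
  field_simp [Nat.factorial_ne_zero]
  push_cast
  ring

end Coefficients

theorem norm_dworkB_le [Fact p.Prime] {K : Type*} [NormedField K] {ι : ℚ_[p] →+* K}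
    (hι : ∀ x, ‖ι x‖ = ‖x‖) {π : K} (hπ : π ^ (p - 1) = -(p : K)) {i : ℕ} (hi : i < 2 * p) :
    ‖dworkB p π i‖ ≤ ‖π‖ ^ i := by
  have hp : p.Prime := Fact.out
  have : CharZero K := charZero_of_injective_ringHom ι.injective
  have hunit : ∀ {n : ℕ}, ¬ p ∣ n → ‖(n : K)‖ = 1 := norm_natCast_of_not_dvd hι
  rcases lt_or_ge i p with hip | hpi
  · rw [dworkB_of_lt π hip, norm_div, norm_pow,
      hunit (by rwa [hp.dvd_factorial, not_le]), div_one]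
  obtain ⟨j, rfl⟩ := Nat.exists_eq_add_of_le hpi
  set Q := (p + 1).ascFactorial j
  have hdvd := hp.dvd_factorial_add_factorial_pred_mul_ascFactorial j
  have hj : ¬ p ∣ j.factorial := by rw [hp.dvd_factorial, not_le]; omega
  have hw : ¬ p ∣ (p - 1).factorial := by rw [hp.dvd_factorial, not_le]; omega
  have hQ : ¬ p ∣ Q := fun h => hj <| (Nat.dvd_add_left (dvd_mul_of_dvd_right h _)).mp hdvd
  calc ‖dworkB p π (p + j)‖
      = ‖π‖ ^ (j + 1) * ‖((j.factorial + (p - 1).factorial * Q : ℕ) : K)‖ := by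
        rw [dworkB_prime_add π hπ (by omega), norm_div, norm_mul, norm_neg, norm_pow, norm_mul,
          norm_mul, hunit hj, hunit hw, hunit hQ]
        ring
    _ ≤ ‖π‖ ^ (j + 1) * (p : ℝ)⁻¹ := by gcongr; exact norm_natCast_le_of_dvd hι hdvd
    _ = ‖π‖ ^ (p + j) := by
        rw [← norm_pow_pred_eq_inv hι hπ, ← pow_add]
        congr 1
        omega

end AHG

theorem stmt_3_general (p : ℕ) [Fact p.Prime]
    {K : Type*} [NormedField K]
    (ι : ℚ_[p] →+* K) (hι : ∀ x, ‖ι x‖ = ‖x‖)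
    (π : K) (hπ : π ^ (p - 1) = -(p : K)) :
    (∀ i : ℕ, i ≤ p - 1 → AHG.dworkB p π i = π ^ i / (Nat.factorial i : K)) ∧
    ∀ i : ℕ, i ≤ 2 * p - 1 →
      ‖AHG.dworkB p π i‖ ≤ ‖π‖ ^ i ∧
      ‖π‖ ^ i = (p : ℝ) ^ (-(i : ℝ) / ((p : ℝ) - 1)) := by
  have hp : p.Prime := Fact.out
  have := hp.two_le
  refine ⟨fun i hi => AHG.dworkB_of_lt π (by omega),
    fun i hi => ⟨AHG.norm_dworkB_le hι hπ (by omega), ?_⟩⟩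
  rw [show (p : ℝ) - 1 = ((p - 1 : ℕ) : ℝ) by rw [Nat.cast_sub hp.one_le, Nat.cast_one]]
  exact Real.pow_eq_rpow_neg_div_of_pow_eq_inv (norm_nonneg π) (by exact_mod_cast hp.pos)
    (by omega) (norm_pow_pred_eq_inv hι hπ) i

/-- `b_i = π^i/i!` for `0 ≤ i ≤ p-1`, and `‖b_i‖ ≤ ‖π‖^i = p^{-i/(p-1)}`
for `0 ≤ i ≤ 2p-1`. -/
theorem stmt_3 (p : ℕ) [Fact p.Prime] (hp2 : p ≠ 2)
    {K : Type*} [NormedField K] [IsUltrametricDist K] [CompleteSpace K] [IsAlgClosed K]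
    (ι : ℚ_[p] →+* K) (hι : ∀ x, ‖ι x‖ = ‖x‖)
    (π : K) (hπ : π ^ (p - 1) = -(p : K)) :
    (∀ i : ℕ, i ≤ p - 1 → AHG.dworkB p π i = π ^ i / (Nat.factorial i : K)) ∧
    ∀ i : ℕ, i ≤ 2 * p - 1 →
      ‖AHG.dworkB p π i‖ ≤ ‖π‖ ^ i ∧
      ‖π‖ ^ i = (p : ℝ) ^ (-(i : ℝ) / ((p : ℝ) - 1)) :=
  stmt_3_general p ι hι π hπ
end

section
/- Every coefficient of the polynomial p^{−1}·B_{(p−1)â_0}(1, y_1,…,y_N) is a rational number lying in ℤ_p, and modulo p it is congruent to the corresponding coefficient of the truncated polynomial Φ_1; explicitly, p^{−1}·B_{(p−1)â_0}(1, y_1,…,y_N) = −Σ_V y_1^{v_1}⋯y_N^{v_N} / ((p−1−v_1−⋯−v_N)!·v_1!⋯v_N!), the sum over (v_0,v_1,…,v_N) ∈ (ℤ_{≥0})^{N+1} with Σ_{i=0}^N v_i â_i = (p−1)â_0, and this polynomial is congruent to Φ_1 coefficientwise modulo p. -/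
open scoped BigOperators Classical

open scoped BigOperators Classical

/-! For `m + s = p - 1` Wilson's theorem gives `(-1)^s s! m! ≡ (p-1)! ≡ -1 (mod p)`. Since all the
exponents involved are below `p`, the Dwork coefficients `b_i` reduce to `π^i / i!`, so
`p⁻¹ B_{(p-1)â_0}` has coefficients `π^{p-1}/(p · m! ∏ v_i!) = -1/(m! ∏ v_i!)`, which are `p`-adic
units; multiplying the congruence by the unit `1/(m! ∏ v_i!)` compares them with the multinomial
coefficients `(-1)^s s!/∏ v_i!` of `Φ_1`. -/

open Finset
open scoped Nat

namespace AHG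

theorem neg_one_pow_mul_factorial_mul_factorial {p m s : ℕ} (h : m + s + 1 = p) :
    ((-1) ^ s * (s ! * m !) : ZMod p) = ((p - 1)! : ZMod p) := by
  induction s generalizing m with
  | zero => subst h; simp
  | succ s ih =>
    have hsum : ((s + 1 : ℕ) : ZMod p) + ((m + 1 : ℕ) : ZMod p) = 0 := by
      rw [← Nat.cast_add, show s + 1 + (m + 1) = p by omega, ZMod.natCast_self]
    rw [← ih (m := m + 1) (by omega), Nat.factorial_succ, Nat.factorial_succ]
    push_cast at hsum ⊢
    linear_combination (-(-1) ^ s * (s ! : ZMod p) * m !) * hsum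

theorem dvd_one_add_neg_one_pow_mul_factorial_mul_factorial {p m s : ℕ} [Fact p.Prime]
    (h : m + s + 1 = p) : (p : ℤ) ∣ 1 + (-1) ^ s * ((s ! * m ! : ℕ) : ℤ) := by
  rw [← ZMod.intCast_zmod_eq_zero_iff_dvd]
  push_cast
  rw [neg_one_pow_mul_factorial_mul_factorial h, ZMod.wilsons_lemma, add_neg_cancel]

theorem not_dvd_factorial_mul_prod_factorial {p : ℕ} (hp : p.Prime) {ι : Type*} [Fintype ι]
    {m : ℕ} {ν : ι → ℕ} (h : m + ∑ i, ν i = p - 1) : ¬ p ∣ m ! * ∏ i, (ν i)! := by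
  have hfact : ∀ k, k ≤ p - 1 → ¬ p ∣ k ! := fun k hk hdvd => by
    have := hp.two_le
    have := hp.dvd_factorial.1 hdvd
    omega
  rw [hp.dvd_mul, not_or, hp.prime.dvd_finsetProd_iff, not_exists]
  refine ⟨hfact m (by omega), fun i ⟨_, hi⟩ => hfact (ν i) ?_ hi⟩
  have := single_le_sum (fun j _ => Nat.zero_le (ν j)) (mem_univ i)
  omega

section PadicNorm

variable {p : ℕ} [Fact p.Prime] {K : Type*} [NormedField K]

theorem norm_natCast_eq_one_of_not_dvd (hK : ∀ z : ℤ, ‖(z : K)‖ = ‖(z : ℚ_[p])‖) {A : ℕ}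
    (hA : ¬ p ∣ A) : ‖(A : K)‖ = 1 := by
  have hA' := hK A
  push_cast at hA'
  rw [hA', Padic.norm_natCast_eq_one_iff]
  exact (Nat.Prime.coprime_iff_not_dvd Fact.out).2 hA

theorem norm_intCast_le_inv_of_dvd (hK : ∀ z : ℤ, ‖(z : K)‖ = ‖(z : ℚ_[p])‖) {z : ℤ}
    (hz : (p : ℤ) ∣ z) : ‖(z : K)‖ ≤ (p : ℝ)⁻¹ := by
  rw [hK]
  simpa using (Padic.norm_int_le_pow_iff_dvd z 1).2 (by simpa using hz)

variable {ι : Type*} [Fintype ι] {m : ℕ} {ν : ι → ℕ}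

theorem norm_factorial_mul_prod_factorial (hK : ∀ z : ℤ, ‖(z : K)‖ = ‖(z : ℚ_[p])‖)
    (h : m + ∑ i, ν i = p - 1) : ‖((m ! * ∏ i, (ν i)! : ℕ) : K)‖ = 1 :=
  norm_natCast_eq_one_of_not_dvd hK (not_dvd_factorial_mul_prod_factorial Fact.out h)

theorem norm_neg_inv_factorials_sub_multinomial_le
    (hK : ∀ z : ℤ, ‖(z : K)‖ = ‖(z : ℚ_[p])‖) (h : m + ∑ i, ν i = p - 1) :
    ‖-((m ! * ∏ i, (ν i)! : ℕ) : K)⁻¹ -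
        (-1) ^ (∑ i, ν i) * (Nat.multinomial univ ν : K)‖ ≤ (p : ℝ)⁻¹ := by
  set s := ∑ i, ν i
  have hA := norm_factorial_mul_prod_factorial hK h
  have hA0 : ((m ! * ∏ i, (ν i)! : ℕ) : K) ≠ 0 := norm_ne_zero_iff.1 (by rw [hA]; norm_num)
  have hs : ((s ! : ℕ) : K) = (∏ i, (ν i)! : ℕ) * Nat.multinomial univ ν := by
    rw [← Nat.cast_mul, Nat.multinomial_spec]
  have hdiff : -((m ! * ∏ i, (ν i)! : ℕ) : K)⁻¹ - (-1) ^ s * (Nat.multinomial univ ν : K) =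
      ((1 + (-1) ^ s * ((s ! * m ! : ℕ) : ℤ) : ℤ) : K) * -((m ! * ∏ i, (ν i)! : ℕ) : K)⁻¹ := by
    field_simp
    push_cast at hs ⊢
    linear_combination (-1) ^ s * (m ! : K) * hs
  rw [hdiff, norm_mul, norm_neg, norm_inv, hA, inv_one, mul_one]
  have hp : 1 ≤ p := (Fact.out : p.Prime).one_le
  exact norm_intCast_le_inv_of_dvd hK
    (dvd_one_add_neg_one_pow_mul_factorial_mul_factorial (by omega))

end PadicNorm

theorem dworkB_of_lt_s9 (p : ℕ) {K : Type*} [Field K] (π : K) {m : ℕ} (hm : m < p) :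
    dworkB p π m = π ^ m / m ! := by
  rw [dworkB, sum_eq_single 0]
  · simp
  · intro k _ hk
    rw [if_neg]
    have := Nat.le_mul_of_pos_right p (Nat.pos_of_ne_zero hk)
    omega
  · simp

variable {n N : ℕ} (a : Fin (N + 1) → Fin n → ℤ)

theorem toNat_sub_sum {ι : Type*} [Fintype ι] (d : ℕ) (ν : ι → ℕ) :
    ((d : ℤ) - ∑ i, (ν i : ℤ)).toNat = d - ∑ i, ν i := by
  have : ∑ i, (ν i : ℤ) = ((∑ i, ν i : ℕ) : ℤ) := by push_cast; rfl
  omega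

theorem exponent_condition_iff (d : ℕ) (ν : Fin N → ℕ) :
    (0 ≤ (d : ℤ) - ∑ i, (ν i : ℤ) ∧
        ((d : ℤ) - ∑ i, (ν i : ℤ)) • hat (a 0) + ∑ i, (ν i : ℤ) • hat (a i.succ) =
          (d : ℤ) • hat (a 0)) ↔
      ν ∈ LplusSet a ∧ ∑ i, ν i ≤ d := by
  have hsum : ∑ i, (ν i : ℤ) = ((∑ i, ν i : ℕ) : ℤ) := by push_cast; rfl
  have hvec : ∑ i, (ν i : ℤ) • hat (a i.succ) = ∑ i, ν i • hat (a i.succ) :=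
    sum_congr rfl fun i _ => natCast_zsmul _ _
  rw [hvec, hsum, sub_smul, sub_add_eq_add_sub, sub_eq_iff_eq_add, add_right_inj,
    natCast_zsmul, LplusSet, Set.mem_ofPred_eq]
  exact and_comm.trans (and_congr_right' (by omega))

theorem Bone_natCast_smul_hat_apply {p d : ℕ} (hd : d < p) {K : Type*} [Field K] (π : K)
    (ν : Fin N →₀ ℕ) :
    Bone p a π ((d : ℤ) • hat (a 0)) ν =
      if 0 ≤ (d : ℤ) - ∑ i, (ν i : ℤ) ∧
          ((d : ℤ) - ∑ i, (ν i : ℤ)) • hat (a 0) + ∑ i, (ν i : ℤ) • hat (a i.succ) =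
            (d : ℤ) • hat (a 0) then
        π ^ d / (((d - ∑ i, ν i)! * ∏ i, (ν i)! : ℕ) : K)
      else 0 := by
  have h0 : ((d : ℤ) • hat (a 0)) 0 = d := by simp [hat]
  simp only [Bone, h0, toNat_sub_sum]
  split_ifs with hν
  · have hs := ((exponent_condition_iff a d ν).1 hν).2
    have hlt : ∀ i, ν i < p := fun i =>
      (single_le_sum (fun j _ => Nat.zero_le (ν j)) (mem_univ i)).trans_lt (hs.trans_lt hd)
    rw [dworkB_of_lt_s9 p π (by omega), prod_congr rfl fun i _ => dworkB_of_lt_s9 p π (hlt i),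
      prod_div_distrib, prod_pow_eq_pow_sum, div_mul_div_comm, ← pow_add, Nat.sub_add_cancel hs]
    push_cast
    rfl
  · rfl

theorem inv_natCast_smul_Bone_pred_smul_hat {p : ℕ} {K : Type*} [Field K] (hp : (p : K) ≠ 0)
    {π : K} (hπ : π ^ (p - 1) = -(p : K)) :
    (p : K)⁻¹ • Bone p a π (((p - 1 : ℕ) : ℤ) • hat (a 0)) = fun ν : Fin N →₀ ℕ =>
      if 0 ≤ ((p - 1 : ℕ) : ℤ) - ∑ i, (ν i : ℤ) ∧
          (((p - 1 : ℕ) : ℤ) - ∑ i, (ν i : ℤ)) • hat (a 0) + ∑ i, (ν i : ℤ) • hat (a i.succ) =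
            ((p - 1 : ℕ) : ℤ) • hat (a 0) then
        -(((p - 1 - ∑ i, ν i)! * ∏ i, (ν i)! : ℕ) : K)⁻¹
      else 0 := by
  have hp0 : 0 < p := Nat.pos_of_ne_zero fun h => hp (by rw [h, Nat.cast_zero])
  funext ν
  change (p : K)⁻¹ * _ = _
  rw [Bone_natCast_smul_hat_apply a (Nat.sub_lt hp0 one_pos), hπ]
  split_ifs
  · field_simp
  · exact mul_zero _

end AHG

theorem stmt_9_general (p : ℕ) [Fact p.Prime]
    {K : Type*} [NormedField K]
    (ι : ℚ_[p] →+* K) (hι : ∀ x, ‖ι x‖ = ‖x‖)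
    (π : K) (hπ : π ^ (p - 1) = -(p : K))
    (n N : ℕ) (a : Fin (N + 1) → Fin n → ℤ) :
    ((p : K)⁻¹ • AHG.Bone p a π (((p : ℤ) - 1) • AHG.hat (a 0)) =
      (fun ν : Fin N →₀ ℕ =>
        if 0 ≤ ((p : ℤ) - 1) - ∑ i : Fin N, (ν i : ℤ) ∧
            ((((p : ℤ) - 1) - ∑ i : Fin N, (ν i : ℤ)) • AHG.hat (a 0) +
              ∑ i : Fin N, (ν i : ℤ) • AHG.hat (a i.succ)) =
              ((p : ℤ) - 1) • AHG.hat (a 0) then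
          -((((((p : ℤ) - 1) - ∑ i : Fin N, (ν i : ℤ)).toNat.factorial *
              ∏ i : Fin N, (ν i).factorial : ℕ)) : K)⁻¹
        else 0)) ∧
    (∀ ν : Fin N →₀ ℕ, ∃ q : ℚ,
      ((p : K)⁻¹ • AHG.Bone p a π (((p : ℤ) - 1) • AHG.hat (a 0))) ν = (q : K) ∧
      ‖((p : K)⁻¹ • AHG.Bone p a π (((p : ℤ) - 1) • AHG.hat (a 0))) ν‖ ≤ 1) ∧
    ∀ ν : Fin N →₀ ℕ,
      ‖((p : K)⁻¹ • AHG.Bone p a π (((p : ℤ) - 1) • AHG.hat (a 0))) ν -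
          AHG.Phi1Series p a K ν‖ ≤ (p : ℝ)⁻¹ := by
  have hp : p.Prime := Fact.out
  have : CharZero K := charZero_of_injective_ringHom ι.injective
  have hK : ∀ z : ℤ, ‖(z : K)‖ = ‖(z : ℚ_[p])‖ := fun z => by rw [← map_intCast ι, hι]
  have hd : ((p - 1 : ℕ) : ℤ) = (p : ℤ) - 1 := by have := hp.one_le; omega
  rw [← hd]
  simp only [AHG.toNat_sub_sum]
  have hB := AHG.inv_natCast_smul_Bone_pred_smul_hat a (Nat.cast_ne_zero.2 hp.ne_zero) hπ
  refine ⟨hB, fun ν => ?_, fun ν => ?_⟩ <;>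
    simp only [hB, AHG.Phi1Series, AHG.exponent_condition_iff] <;> split_ifs with hν
  · refine ⟨-(((p - 1 - ∑ i, ν i)! * ∏ i, (ν i)! : ℕ) : ℚ)⁻¹, by push_cast; rfl, ?_⟩
    rw [norm_neg, norm_inv, AHG.norm_factorial_mul_prod_factorial hK (by omega), inv_one]
  · exact ⟨0, by simp, by simp⟩
  · exact AHG.norm_neg_inv_factorials_sub_multinomial_le hK (by omega)
  · simp

/-- `p⁻¹ B_{(p-1)â_0}(1,y) = -Σ_V y^v/((p-1-Σv_i)! v_1!⋯v_N!)`, its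
coefficients are rational numbers of norm `≤ 1` (i.e. lying in `ℤ_p`), and they are
congruent mod `p` (i.e. within distance `1/p`) to the coefficients of `Φ_1`. -/
theorem stmt_9 (p : ℕ) [Fact p.Prime] (hp2 : p ≠ 2)
    {K : Type*} [NormedField K] [IsUltrametricDist K] [CompleteSpace K] [IsAlgClosed K]
    (ι : ℚ_[p] →+* K) (hι : ∀ x, ‖ι x‖ = ‖x‖)
    (π : K) (hπ : π ^ (p - 1) = -(p : K))
    (n N : ℕ) (hn : 0 < n) (hN : 0 < N) (a : Fin (N + 1) → Fin n → ℤ) :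
    ((p : K)⁻¹ • AHG.Bone p a π (((p : ℤ) - 1) • AHG.hat (a 0)) =
      (fun ν : Fin N →₀ ℕ =>
        if 0 ≤ ((p : ℤ) - 1) - ∑ i : Fin N, (ν i : ℤ) ∧
            ((((p : ℤ) - 1) - ∑ i : Fin N, (ν i : ℤ)) • AHG.hat (a 0) +
              ∑ i : Fin N, (ν i : ℤ) • AHG.hat (a i.succ)) =
              ((p : ℤ) - 1) • AHG.hat (a 0) then
          -((((((p : ℤ) - 1) - ∑ i : Fin N, (ν i : ℤ)).toNat.factorial *
              ∏ i : Fin N, (ν i).factorial : ℕ)) : K)⁻¹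
        else 0)) ∧
    (∀ ν : Fin N →₀ ℕ, ∃ q : ℚ,
      ((p : K)⁻¹ • AHG.Bone p a π (((p : ℤ) - 1) • AHG.hat (a 0))) ν = (q : K) ∧
      ‖((p : K)⁻¹ • AHG.Bone p a π (((p : ℤ) - 1) • AHG.hat (a 0))) ν‖ ≤ 1) ∧
    ∀ ν : Fin N →₀ ℕ,
      ‖((p : K)⁻¹ • AHG.Bone p a π (((p : ℤ) - 1) • AHG.hat (a 0))) ν -
          AHG.Phi1Series p a K ν‖ ≤ (p : ℝ)⁻¹ :=
  stmt_9_general p ι hι π hπ n N a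
end

section
/- For each ρ ∈ M°, the series ξ_ρ(λ) = Σ (−1)^{ρ_0−1+l_1+⋯+l_N} (ρ_0−1+l_1+⋯+l_N)!/(l_1!⋯l_N!) ∏_{i=1}^N (λ_i/λ_0)^{l_i} — the sum over (l_0,…,l_N) ∈ (ℤ_{≥0})^{N+1} with l_1â_1+⋯+l_Nâ_N − (l_0+1)â_0 = −ρ (which forces l_0 = ρ_0−1+l_1+⋯+l_N) — has integer coefficients, so ξ_ρ ∈ R with ‖ξ_ρ‖ ≤ 1; hence ξ(λ,x) = Σ_{ρ∈M°} ξ_ρ(λ)(πλ_0)^{−ρ_0}x^{−ρ} belongs to S with ‖ξ(λ,x)‖ ≤ 1. Moreover ξ_{â_0} = Φ, which is an invertible element of R with ‖ξ_{â_0}‖ = 1, so ‖ξ(λ,x)‖ = ‖ξ_{â_0}‖. -/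
open scoped BigOperators Classical

open scoped BigOperators Classical

/-!
On `M°` the first coordinate satisfies `ρ_0 ≥ 1`, so the coefficient
`(ρ_0-1+Σ l_i)! / ∏ l_i!` of `ξ_ρ` is an integer: `∏ l_i!` divides `(Σ l_i)!`.
Integers have norm at most `1` in an ultrametric field, which bounds `ξ_ρ` in `R` and `ξ` in `S`.
For `ρ = â_0` the coefficients are those of `Φ`, whose constant term is `1`; hence `Φ` has norm `1`
and is the image of a unit of `ℤ⟦λ_i/λ_0⟧`, so its inverse has integer coefficients as well.
-/

namespace AHG

section Cone

variable {n N : ℕ} (a : Fin (N + 1) → Fin n → ℤ)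

lemma apply_zero_nonneg_of_mem_cone {x : Fin (n + 1) → ℝ} (hx : x ∈ cone a) : 0 ≤ x 0 := by
  obtain ⟨t, ht, rfl⟩ := hx
  simpa [hat] using Finset.sum_nonneg fun j _ => ht j

lemma hat_mem_cone (j : Fin (N + 1)) : (fun i => (hat (a j) i : ℝ)) ∈ cone a :=
  ⟨Pi.single j 1, fun k => by by_cases hk : k = j <;> simp [hk], by simp [Pi.single_apply]⟩

/-- `ρ_0 = 0` would put `ρ` on the proper face of `C` cut out by the first coordinate. -/
lemma one_le_apply_zero_of_mem_latticeMint {ρ : Fin (n + 1) → ℤ} (hρ : ρ ∈ latticeMint a) :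
    1 ≤ ρ 0 := by
  obtain ⟨⟨hcone, -⟩, hface⟩ := hρ
  have hnonneg : (0 : ℝ) ≤ ρ 0 := apply_zero_nonneg_of_mem_cone a hcone
  by_contra! hlt
  have hzero : ρ 0 = 0 := by exact_mod_cast le_antisymm (by omega) (by exact_mod_cast hnonneg)
  have := hface (LinearMap.proj 0) (fun x hx => apply_zero_nonneg_of_mem_cone a hx)
    (by simp [hzero]) _ (hat_mem_cone a 0)
  simp [hat] at this

end Cone

section IntegralSeries

variable {σ K : Type*}

lemma exists_intCast_eq_neg_one_zpow [DivisionRing K] (m : ℤ) : ∃ w : ℤ, (-1 : K) ^ m = w := by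
  rcases Int.even_or_odd m with hm | hm
  · exact ⟨1, by simp [hm.neg_one_zpow]⟩
  · exact ⟨-1, by simp [hm.neg_one_zpow]⟩

lemma exists_map_intCast_eq [Ring K] {f : MvPowerSeries σ K} (hf : ∀ ν, ∃ z : ℤ, f ν = z) :
    ∃ g : MvPowerSeries σ ℤ, MvPowerSeries.map (Int.castRingHom K) g = f := by
  choose g hg using hf
  exact ⟨g, funext fun ν => (hg ν).symm⟩

lemma exists_intCast_inv_of_constantCoeff_eq_one [Ring K] [CharZero K] {f : MvPowerSeries σ K}
    (hf : ∀ ν, ∃ z : ℤ, f ν = z) (h0 : MvPowerSeries.constantCoeff f = 1) :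
    ∃ g : MvPowerSeries σ K, (∀ ν, ∃ z : ℤ, g ν = z) ∧ f * g = 1 := by
  obtain ⟨f', rfl⟩ := exists_map_intCast_eq hf
  have h0' : MvPowerSeries.constantCoeff f' = 1 := by
    rw [MvPowerSeries.constantCoeff_map] at h0
    simpa using h0
  obtain ⟨u, hu⟩ := MvPowerSeries.isUnit_iff_constantCoeff.mpr (h0' ▸ isUnit_one)
  refine ⟨MvPowerSeries.map (Int.castRingHom K) ↑u⁻¹, fun ν => ⟨(↑u⁻¹ : MvPowerSeries σ ℤ) ν, rfl⟩,
    ?_⟩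
  rw [← map_mul, ← hu, Units.mul_inv, map_one]

end IntegralSeries

section Norms

variable {n N : ℕ} {K : Type*} [NormedField K]

lemma norm_apply_le_one_of_intCast [IsUltrametricDist K] {f : MvPowerSeries (Fin N) K}
    (hf : ∀ ν, ∃ z : ℤ, f ν = z) (ν : Fin N →₀ ℕ) : ‖f ν‖ ≤ 1 := by
  obtain ⟨z, hz⟩ := hf ν
  exact hz ▸ IsUltrametricDist.norm_intCast_le_one K z

lemma memR_of_norm_le {f : MvPowerSeries (Fin N) K} {C : ℝ} (hf : ∀ ν, ‖f ν‖ ≤ C) : memR f :=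
  ⟨C, by rintro _ ⟨ν, rfl⟩; exact hf ν⟩

lemma Rnorm_le {f : MvPowerSeries (Fin N) K} {C : ℝ} (hC : 0 ≤ C) (hf : ∀ ν, ‖f ν‖ ≤ C) :
    Rnorm f ≤ C :=
  Real.iSup_le hf hC

lemma norm_apply_le_Rnorm {f : MvPowerSeries (Fin N) K} (hf : memR f) (ν : Fin N →₀ ℕ) :
    ‖f ν‖ ≤ Rnorm f :=
  le_ciSup hf ν

lemma Rnorm_eq_one_of_intCast [IsUltrametricDist K] {f : MvPowerSeries (Fin N) K}
    (hf : ∀ ν, ∃ z : ℤ, f ν = z) (h0 : f 0 = 1) : Rnorm f = 1 :=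
  le_antisymm (Rnorm_le zero_le_one (norm_apply_le_one_of_intCast hf)) <| by
    simpa [h0] using norm_apply_le_Rnorm (memR_of_norm_le (norm_apply_le_one_of_intCast hf)) 0

lemma memS_of_norm_le (a : Fin (N + 1) → Fin n → ℤ) {ξ : Msub a → MvPowerSeries (Fin N) K}
    {C : ℝ} (hξ : ∀ μ ν, ‖ξ μ ν‖ ≤ C) : memS a ξ :=
  ⟨C, by rintro _ ⟨⟨μ, ν⟩, rfl⟩; exact hξ μ ν⟩

lemma Snorm_le (a : Fin (N + 1) → Fin n → ℤ) {ξ : Msub a → MvPowerSeries (Fin N) K}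
    {C : ℝ} (hC : 0 ≤ C) (hξ : ∀ μ, Rnorm (ξ μ) ≤ C) : Snorm a ξ ≤ C :=
  Real.iSup_le hξ hC

lemma Snorm_eq_Rnorm_of_forall_le (a : Fin (N + 1) → Fin n → ℤ)
    {ξ : Msub a → MvPowerSeries (Fin N) K} (μ0 : Msub a) (hξ : ∀ μ, Rnorm (ξ μ) ≤ Rnorm (ξ μ0)) :
    Snorm a ξ = Rnorm (ξ μ0) :=
  have : Nonempty (Msub a) := ⟨μ0⟩
  le_antisymm (ciSup_le hξ) (le_ciSup ⟨_, by rintro _ ⟨μ, rfl⟩; exact hξ μ⟩ μ0)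

end Norms

section Coefficients

variable {n N : ℕ} (a : Fin (N + 1) → Fin n → ℤ) (K : Type*) [Field K]

lemma xiRho_apply_intCast [CharZero K] {ρ : Fin (n + 1) → ℤ} (hρ : 1 ≤ ρ 0) (ν : Fin N →₀ ℕ) :
    ∃ z : ℤ, xiRho a K ρ ν = z := by
  rw [xiRho]
  split_ifs with h
  · set m := ρ 0 - 1 + ∑ i : Fin N, (ν i : ℤ)
    have hcast : ∑ i : Fin N, (ν i : ℤ) = ((∑ i : Fin N, ν i : ℕ) : ℤ) := (Nat.cast_sum _ _).symm
    have hsum : ∑ i : Fin N, ν i ≤ m.toNat := by omega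
    have hdvd : ∏ i : Fin N, (ν i).factorial ∣ m.toNat.factorial :=
      (Nat.prod_factorial_dvd_factorial_sum _ _).trans (Nat.factorial_dvd_factorial hsum)
    obtain ⟨w, hw⟩ := exists_intCast_eq_neg_one_zpow (K := K) m
    exact ⟨w * (m.toNat.factorial / ∏ i : Fin N, (ν i).factorial : ℕ), by
      rw [mul_div_assoc, ← Nat.cast_div_charZero hdvd, hw, Int.cast_mul, Int.cast_natCast]⟩
  · exact ⟨0, by simp⟩

lemma PhiSeries_apply_intCast (l : Fin N →₀ ℕ) : ∃ z : ℤ, PhiSeries a K l = z := by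
  rw [PhiSeries]
  split_ifs
  · exact ⟨(-1) ^ (∑ i : Fin N, l i) * Nat.multinomial Finset.univ l, by push_cast; ring⟩
  · exact ⟨0, by simp⟩

lemma PhiSeries_apply_zero : PhiSeries a K 0 = 1 := by
  have h0 : (fun _ => 0 : Fin N → ℕ) ∈ LplusSet a := by simp [LplusSet]
  simp [PhiSeries, h0, Nat.multinomial]

/-- For `ρ = â_0` the constraint in the definition of `ξ_ρ` is exactly `l ∈ L_+`. -/
lemma xiRho_hat_zero [CharZero K] : xiRho a K (hat (a 0)) = PhiSeries a K := by
  funext l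
  have hsum : ∑ i : Fin N, (l i : ℤ) = ((∑ i : Fin N, l i : ℕ) : ℤ) := (Nat.cast_sum _ _).symm
  have hhat : hat (a 0) 0 = 1 := rfl
  have hL : (∑ i : Fin N, (l i : ℤ) • hat (a i.succ)) -
      (1 + ((∑ i : Fin N, l i : ℕ) : ℤ)) • hat (a 0) = -hat (a 0) ↔
        (fun i => l i) ∈ LplusSet a := by
    rw [sub_eq_iff_eq_add, add_smul, one_smul, neg_add_cancel_left]
    simp only [natCast_zsmul]
    rfl
  simp only [xiRho, PhiSeries, hhat, sub_self, zero_add, hsum]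
  simp only [hL, Int.natCast_nonneg, true_and, zpow_natCast, Int.toNat_natCast]
  split_ifs
  · have hprod : ((∏ i : Fin N, (l i).factorial : ℕ) : K) ≠ 0 :=
      Nat.cast_ne_zero.mpr (by positivity)
    rw [div_eq_iff hprod, mul_assoc, ← Nat.cast_mul, mul_comm (Nat.multinomial _ _),
      Nat.multinomial_spec]
  · rfl

end Coefficients

end AHG

theorem stmt_17_general (p : ℕ) [Fact p.Prime]
    {K : Type*} [NormedField K] [IsUltrametricDist K]
    (ι : ℚ_[p] →+* K)
    (n N : ℕ) (a : Fin (N + 1) → Fin n → ℤ) :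
    (∀ ρ ∈ AHG.latticeMint a,
      (∀ ν : Fin N →₀ ℕ, ∃ z : ℤ, AHG.xiRho a K ρ ν = (z : K)) ∧
      AHG.memR (AHG.xiRho a K ρ) ∧ AHG.Rnorm (AHG.xiRho a K ρ) ≤ 1) ∧
    AHG.memS a (fun ρ : AHG.Msub a => AHG.xiRho a K ρ.1) ∧
    AHG.Snorm a (fun ρ : AHG.Msub a => AHG.xiRho a K ρ.1) ≤ 1 ∧
    ∀ μ0 : AHG.Msub a, μ0.1 = AHG.hat (a 0) →
      AHG.xiRho a K μ0.1 = AHG.PhiSeries a K ∧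
      AHG.invR (AHG.PhiSeries a K) ∧
      AHG.Rnorm (AHG.PhiSeries a K) = 1 ∧
      AHG.Snorm a (fun ρ : AHG.Msub a => AHG.xiRho a K ρ.1) =
        AHG.Rnorm (AHG.xiRho a K μ0.1) := by
  open AHG in
  have : CharZero K := (RingHom.charZero_iff ι.injective).mp inferInstance
  have hxi : ∀ ρ : Msub a, ∀ ν, ∃ z : ℤ, xiRho a K ρ.1 ν = z := fun ρ =>
    xiRho_apply_intCast a K (one_le_apply_zero_of_mem_latticeMint a ρ.2)
  have hxi_le : ∀ ρ : Msub a, Rnorm (xiRho a K ρ.1) ≤ 1 := fun ρ =>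
    Rnorm_le zero_le_one (norm_apply_le_one_of_intCast (hxi ρ))
  have hΦ := PhiSeries_apply_intCast a K
  have hΦ_norm := Rnorm_eq_one_of_intCast hΦ (PhiSeries_apply_zero a K)
  refine ⟨fun ρ hρ => ⟨hxi ⟨ρ, hρ⟩, memR_of_norm_le (norm_apply_le_one_of_intCast (hxi ⟨ρ, hρ⟩)),
      hxi_le ⟨ρ, hρ⟩⟩, memS_of_norm_le a fun ρ => norm_apply_le_one_of_intCast (hxi ρ),
      Snorm_le a zero_le_one hxi_le, fun μ0 hμ0 => ?_⟩
  have hxi_Φ : xiRho a K μ0.1 = PhiSeries a K := hμ0 ▸ xiRho_hat_zero a K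
  obtain ⟨g, hg, hΦg⟩ := exists_intCast_inv_of_constantCoeff_eq_one hΦ (PhiSeries_apply_zero a K)
  exact ⟨hxi_Φ, ⟨memR_of_norm_le (norm_apply_le_one_of_intCast hΦ),
    g, memR_of_norm_le (norm_apply_le_one_of_intCast hg), hΦg⟩, hΦ_norm,
    Snorm_eq_Rnorm_of_forall_le a μ0 fun ρ => by rw [hxi_Φ, hΦ_norm]; exact hxi_le ρ⟩

/-- each `ξ_ρ` (`ρ ∈ M°`) has integer coefficients, so `ξ_ρ ∈ R` with
`‖ξ_ρ‖ ≤ 1`; hence `ξ(λ,x) ∈ S` with `‖ξ(λ,x)‖ ≤ 1`; moreover `ξ_{â_0} = Φ`, which is an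
invertible element of `R` of norm `1`, so `‖ξ(λ,x)‖ = ‖ξ_{â_0}‖`. -/
theorem stmt_17 (p : ℕ) [Fact p.Prime] (hp2 : p ≠ 2)
    {K : Type*} [NormedField K] [IsUltrametricDist K] [CompleteSpace K] [IsAlgClosed K]
    (ι : ℚ_[p] →+* K) (hι : ∀ x, ‖ι x‖ = ‖x‖)
    (π : K) (hπ : π ^ (p - 1) = -(p : K))
    (n N : ℕ) (hn : 0 < n) (hN : 0 < N) (a : Fin (N + 1) → Fin n → ℤ) :
    (∀ ρ ∈ AHG.latticeMint a,
      (∀ ν : Fin N →₀ ℕ, ∃ z : ℤ, AHG.xiRho a K ρ ν = (z : K)) ∧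
      AHG.memR (AHG.xiRho a K ρ) ∧ AHG.Rnorm (AHG.xiRho a K ρ) ≤ 1) ∧
    AHG.memS a (fun ρ : AHG.Msub a => AHG.xiRho a K ρ.1) ∧
    AHG.Snorm a (fun ρ : AHG.Msub a => AHG.xiRho a K ρ.1) ≤ 1 ∧
    ∀ μ0 : AHG.Msub a, μ0.1 = AHG.hat (a 0) →
      AHG.xiRho a K μ0.1 = AHG.PhiSeries a K ∧
      AHG.invR (AHG.PhiSeries a K) ∧
      AHG.Rnorm (AHG.PhiSeries a K) = 1 ∧
      AHG.Snorm a (fun ρ : AHG.Msub a => AHG.xiRho a K ρ.1) =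
        AHG.Rnorm (AHG.xiRho a K μ0.1) :=
  stmt_17_general p ι n N a
end
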